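/- arXiv:1805.07416 — 8 statements merged into one kernel-verified Lean document; each statement's English description precedes it below -/
import Mathlib

section
/- For every transport plan π between μ and ν on the N×N grid G, there exists a feasible flow (F₁, F₂) between μ and ν such that R(F₁,F₂) = Σ_{(a,j)∈G} Σ_{(i,b)∈G} ((a−i)² + (j−b)²) · π((a,j),(i,b)). -/
/-- For every transport plan `π` between `μ` and `ν` on the `N × N`
grid, there exists a feasible flow `(f1, f2)` between `μ` and `ν` such that
`R(f1, f2)` equals the transport cost of `π` for the squared Euclidean ground cost. -/
theorem plan_to_flow (N : ℕ) (hN : 0 < N)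
    (μ ν : Fin N × Fin N → ℝ)
    (hμ0 : ∀ x, 0 ≤ μ x) (hμ1 : ∑ x, μ x = 1)
    (hν0 : ∀ x, 0 ≤ ν x) (hν1 : ∑ x, ν x = 1)
    (π : Fin N × Fin N → Fin N × Fin N → ℝ)
    (hπ0 : ∀ x y, 0 ≤ π x y)
    (hπμ : ∀ x, ∑ y, π x y = μ x)
    (hπν : ∀ y, ∑ x, π x y = ν y) :
    ∃ f1 f2 : Fin N → Fin N → Fin N → ℝ,
      (∀ a i j, 0 ≤ f1 a i j) ∧ (∀ i j b, 0 ≤ f2 i j b) ∧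
      (∀ a j, ∑ i, f1 a i j = μ (a, j)) ∧
      (∀ i b, ∑ j, f2 i j b = ν (i, b)) ∧
      (∀ i j, ∑ a, f1 a i j = ∑ b, f2 i j b) ∧
      (∑ i : Fin N, ∑ j : Fin N,
          ((∑ a : Fin N, (((a : ℕ) : ℝ) - ((i : ℕ) : ℝ)) ^ 2 * f1 a i j)
            + ∑ b : Fin N, (((j : ℕ) : ℝ) - ((b : ℕ) : ℝ)) ^ 2 * f2 i j b)
        = ∑ x : Fin N × Fin N, ∑ y : Fin N × Fin N,
            ((((x.1 : ℕ) : ℝ) - ((y.1 : ℕ) : ℝ)) ^ 2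
              + (((x.2 : ℕ) : ℝ) - ((y.2 : ℕ) : ℝ)) ^ 2) * π x y) := by
  refine ⟨fun a i j => ∑ b, π (a, j) (i, b),
         fun i j b => ∑ a, π (a, j) (i, b), ?_, ?_, ?_, ?_, ?_, ?_⟩
  · intro a i j; exact Finset.sum_nonneg fun b _ => hπ0 _ _
  · intro i j b; exact Finset.sum_nonneg fun a _ => hπ0 _ _
  · intro a j
    rw [← hπμ (a, j), Fintype.sum_prod_type]
  · intro i b
    rw [← hπν (i, b), Fintype.sum_prod_type]
    exact Finset.sum_comm
  · intro i j
    exact Finset.sum_comm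
  · have swap3 : ∀ g : Fin N → Fin N → Fin N → ℝ,
        (∑ i, ∑ j, ∑ a, g i j a) = ∑ a, ∑ j, ∑ i, g i j a := by
      intro g
      rw [show (∑ i, ∑ j, ∑ a, g i j a) = ∑ i, ∑ a, ∑ j, g i j a from
        Finset.sum_congr rfl fun i _ => Finset.sum_comm, Finset.sum_comm]
      exact Finset.sum_congr rfl fun a _ => Finset.sum_comm
    simp only [Fintype.sum_prod_type, Finset.mul_sum, add_mul, Finset.sum_add_distrib]
    congr 1
    · exact swap3 (fun i j a => ∑ b : Fin N, (((a:ℕ):ℝ) - ((i:ℕ):ℝ))^2 * π (a, j) (i, b))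
    · rw [show (∑ i : Fin N, ∑ j : Fin N, ∑ b : Fin N, ∑ a : Fin N, (((j:ℕ):ℝ) - ((b:ℕ):ℝ))^2 * π (a, j) (i, b))
          = ∑ i : Fin N, ∑ j : Fin N, ∑ a : Fin N, ∑ b : Fin N, (((j:ℕ):ℝ) - ((b:ℕ):ℝ))^2 * π (a, j) (i, b) from
        Finset.sum_congr rfl fun i _ => Finset.sum_congr rfl fun j _ => Finset.sum_comm]
      exact swap3 (fun i j a => ∑ b : Fin N, (((j:ℕ):ℝ) - ((b:ℕ):ℝ))^2 * π (a, j) (i, b))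
end

section
/- For every feasible flow (F₁, F₂) between μ and ν on the N×N grid G, there exists a transport plan π between μ and ν such that Σ_{(a,j)∈G} Σ_{(i,b)∈G} ((a−i)² + (j−b)²) · π((a,j),(i,b)) = R(F₁,F₂). -/
lemma flow_aux {n : ℕ} (A B p q : Fin n → ℝ) (hp : ∀ a, 0 ≤ p a) (hq : ∀ b, 0 ≤ q b)
    (h : ∑ a, p a = ∑ b, q b) :
    ∑ a, ∑ b, (A a + B b) * (p a * q b / ∑ a, p a)
      = ∑ a, A a * p a + ∑ b, B b * q b := by
  by_cases h0 : ∑ a, p a = 0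
  · have hp0 : ∀ a, p a = 0 := fun a =>
      (Finset.sum_eq_zero_iff_of_nonneg (fun a _ => hp a)).mp h0 a (Finset.mem_univ a)
    have hq0 : ∀ b, q b = 0 := fun b =>
      (Finset.sum_eq_zero_iff_of_nonneg (fun b _ => hq b)).mp (h ▸ h0) b (Finset.mem_univ b)
    simp [hp0, hq0]
  · have step1 : ∑ a, ∑ b, (A a + B b) * (p a * q b / ∑ a, p a)
        = (∑ a, ∑ b, (A a + B b) * (p a * q b)) / ∑ a, p a := by
      rw [Finset.sum_div]
      refine Finset.sum_congr rfl fun a _ => ?_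
      rw [Finset.sum_div]
      exact Finset.sum_congr rfl fun b _ => by ring
    have key : ∑ a, ∑ b, (A a + B b) * (p a * q b)
        = (∑ a, A a * p a) * (∑ b, q b) + (∑ a, p a) * (∑ b, B b * q b) := by
      rw [Finset.sum_mul_sum, Finset.sum_mul_sum, ← Finset.sum_add_distrib]
      refine Finset.sum_congr rfl fun a _ => ?_
      rw [← Finset.sum_add_distrib]
      exact Finset.sum_congr rfl fun b _ => by ring
    rw [step1, key, ← h]
    field_simp

/-- For every feasible flow `(f1, f2)` between `μ` and `ν` on the
`N × N` grid, there exists a transport plan `π` between `μ` and `ν` whose transport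
cost (for the squared Euclidean ground cost) equals `R(f1, f2)`. -/
theorem flow_to_plan (N : ℕ) (hN : 0 < N)
    (μ ν : Fin N × Fin N → ℝ)
    (hμ0 : ∀ x, 0 ≤ μ x) (hμ1 : ∑ x, μ x = 1)
    (hν0 : ∀ x, 0 ≤ ν x) (hν1 : ∑ x, ν x = 1)
    (f1 f2 : Fin N → Fin N → Fin N → ℝ)
    (hf1 : ∀ a i j, 0 ≤ f1 a i j) (hf2 : ∀ i j b, 0 ≤ f2 i j b)
    (hμf : ∀ a j, ∑ i, f1 a i j = μ (a, j))
    (hνf : ∀ i b, ∑ j, f2 i j b = ν (i, b))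
    (hconn : ∀ i j, ∑ a, f1 a i j = ∑ b, f2 i j b) :
    ∃ π : Fin N × Fin N → Fin N × Fin N → ℝ,
      (∀ x y, 0 ≤ π x y) ∧
      (∀ x, ∑ y, π x y = μ x) ∧
      (∀ y, ∑ x, π x y = ν y) ∧
      (∑ x : Fin N × Fin N, ∑ y : Fin N × Fin N,
          ((((x.1 : ℕ) : ℝ) - ((y.1 : ℕ) : ℝ)) ^ 2
            + (((x.2 : ℕ) : ℝ) - ((y.2 : ℕ) : ℝ)) ^ 2) * π x y
        = ∑ i : Fin N, ∑ j : Fin N,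
            ((∑ a : Fin N, (((a : ℕ) : ℝ) - ((i : ℕ) : ℝ)) ^ 2 * f1 a i j)
              + ∑ b : Fin N, (((j : ℕ) : ℝ) - ((b : ℕ) : ℝ)) ^ 2 * f2 i j b)) := by
  classical
  have hS0 : ∀ i j, (0:ℝ) ≤ ∑ a, f1 a i j :=
    fun i j => Finset.sum_nonneg fun a _ => hf1 a i j
  have hz1 : ∀ i j, (∑ a, f1 a i j) = 0 → ∀ a, f1 a i j = 0 := fun i j h a =>
    (Finset.sum_eq_zero_iff_of_nonneg (fun a _ => hf1 a i j)).mp h a (Finset.mem_univ a)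
  have hz2 : ∀ i j, (∑ a, f1 a i j) = 0 → ∀ b, f2 i j b = 0 := fun i j h b =>
    (Finset.sum_eq_zero_iff_of_nonneg (fun b _ => hf2 i j b)).mp ((hconn i j) ▸ h) b
      (Finset.mem_univ b)
  refine ⟨fun x y => f1 x.1 y.1 x.2 * f2 y.1 x.2 y.2 / ∑ a, f1 a y.1 x.2, ?_, ?_, ?_, ?_⟩
  · intro x y
    exact div_nonneg (mul_nonneg (hf1 _ _ _) (hf2 _ _ _)) (hS0 _ _)
  · rintro ⟨a, j⟩
    dsimp only
    rw [Fintype.sum_prod_type, ← hμf a j]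
    refine Finset.sum_congr rfl fun i _ => ?_
    dsimp only
    by_cases h : (∑ a, f1 a i j) = 0
    · simp [hz1 i j h a]
    · rw [← Finset.sum_div, ← Finset.mul_sum, ← hconn i j]
      exact mul_div_cancel_right₀ _ h
  · rintro ⟨i, b⟩
    dsimp only
    rw [Fintype.sum_prod_type, Finset.sum_comm, ← hνf i b]
    refine Finset.sum_congr rfl fun j _ => ?_
    dsimp only
    by_cases h : (∑ a, f1 a i j) = 0
    · simp [hz2 i j h b]
    · rw [← Finset.sum_div, ← Finset.sum_mul]
      exact mul_div_cancel_left₀ _ h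
  · dsimp only
    simp only [Fintype.sum_prod_type]
    rw [Finset.sum_comm]
    rw [show (∑ j : Fin N, ∑ a : Fin N, ∑ i : Fin N, ∑ b : Fin N,
        ((((a : ℕ) : ℝ) - ((i : ℕ) : ℝ)) ^ 2 + (((j : ℕ) : ℝ) - ((b : ℕ) : ℝ)) ^ 2)
          * (f1 a i j * f2 i j b / ∑ a, f1 a i j))
        = ∑ j : Fin N, ∑ i : Fin N, ∑ a : Fin N, ∑ b : Fin N,
        ((((a : ℕ) : ℝ) - ((i : ℕ) : ℝ)) ^ 2 + (((j : ℕ) : ℝ) - ((b : ℕ) : ℝ)) ^ 2)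
          * (f1 a i j * f2 i j b / ∑ a, f1 a i j)
        from Finset.sum_congr rfl fun j _ => Finset.sum_comm]
    rw [Finset.sum_comm]
    refine Finset.sum_congr rfl fun i _ => Finset.sum_congr rfl fun j _ => ?_
    exact flow_aux (fun a => (((a : ℕ) : ℝ) - ((i : ℕ) : ℝ)) ^ 2)
      (fun b => (((j : ℕ) : ℝ) - ((b : ℕ) : ℝ)) ^ 2)
      (fun a => f1 a i j) (fun b => f2 i j b)
      (fun a => hf1 a i j) (fun b => hf2 i j b) (hconn i j)
end

section
/- The squared Kantorovich–Wasserstein distance of order 2 between μ and ν equals the minimum of R over all feasible flows: W₂²(μ,ν) = min_{(F₁,F₂)∈𝓕(μ,ν)} R(F₁,F₂). -/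
/-- Reordering a quadruple sum. -/
lemma sum4_swap {N : ℕ} (g : Fin N → Fin N → Fin N → Fin N → ℝ) :
    ∑ a, ∑ j, ∑ i, ∑ b, g a j i b = ∑ i, ∑ j, ∑ a, ∑ b, g a j i b := by
  have h1 : ∑ a, ∑ j, ∑ i, ∑ b, g a j i b = ∑ a, ∑ i, ∑ j, ∑ b, g a j i b :=
    Finset.sum_congr rfl fun a _ => Finset.sum_comm
  have h2 : ∑ a, ∑ i, ∑ j, ∑ b, g a j i b = ∑ i, ∑ a, ∑ j, ∑ b, g a j i b :=
    Finset.sum_comm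
  have h3 : ∑ i, ∑ a, ∑ j, ∑ b, g a j i b = ∑ i, ∑ j, ∑ a, ∑ b, g a j i b :=
    Finset.sum_congr rfl fun i _ => Finset.sum_comm
  rw [h1, h2, h3]

/-- Rearranging the transport cost of a plan into "flow" form. -/
lemma cost_rearrange {N : ℕ} (π : Fin N × Fin N → Fin N × Fin N → ℝ) :
    ∑ x : Fin N × Fin N, ∑ y : Fin N × Fin N,
        ((((x.1 : ℕ) : ℝ) - ((y.1 : ℕ) : ℝ)) ^ 2
          + (((x.2 : ℕ) : ℝ) - ((y.2 : ℕ) : ℝ)) ^ 2) * π x y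
      = ∑ i : Fin N, ∑ j : Fin N,
          ((∑ a : Fin N, (((a : ℕ) : ℝ) - ((i : ℕ) : ℝ)) ^ 2 * ∑ b, π (a, j) (i, b))
            + ∑ b : Fin N, (((j : ℕ) : ℝ) - ((b : ℕ) : ℝ)) ^ 2 * ∑ a, π (a, j) (i, b)) := by
  simp only [Fintype.sum_prod_type]
  rw [sum4_swap (g := fun a j i b =>
      ((((a : ℕ) : ℝ) - ((i : ℕ) : ℝ)) ^ 2
        + (((j : ℕ) : ℝ) - ((b : ℕ) : ℝ)) ^ 2) * π (a, j) (i, b))]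
  refine Finset.sum_congr rfl fun i _ => Finset.sum_congr rfl fun j _ => ?_
  calc ∑ a : Fin N, ∑ b : Fin N,
        ((((a : ℕ) : ℝ) - ((i : ℕ) : ℝ)) ^ 2
          + (((j : ℕ) : ℝ) - ((b : ℕ) : ℝ)) ^ 2) * π (a, j) (i, b)
      = ∑ a : Fin N, ((∑ b : Fin N, (((a : ℕ) : ℝ) - ((i : ℕ) : ℝ)) ^ 2 * π (a, j) (i, b))
          + ∑ b : Fin N, (((j : ℕ) : ℝ) - ((b : ℕ) : ℝ)) ^ 2 * π (a, j) (i, b)) := by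
        refine Finset.sum_congr rfl fun a _ => ?_
        rw [← Finset.sum_add_distrib]
        exact Finset.sum_congr rfl fun b _ => add_mul _ _ _
    _ = (∑ a : Fin N, ∑ b : Fin N, (((a : ℕ) : ℝ) - ((i : ℕ) : ℝ)) ^ 2 * π (a, j) (i, b))
          + ∑ a : Fin N, ∑ b : Fin N, (((j : ℕ) : ℝ) - ((b : ℕ) : ℝ)) ^ 2 * π (a, j) (i, b) :=
        Finset.sum_add_distrib
    _ = _ := by
        congr 1
        · exact Finset.sum_congr rfl fun a _ => (Finset.mul_sum _ _ _).symm
        · rw [Finset.sum_comm]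
          exact Finset.sum_congr rfl fun b _ => (Finset.mul_sum _ _ _).symm

/-- The squared Kantorovich–Wasserstein distance of order 2 between
`μ` and `ν` (the minimum transport cost over all transport plans, for the squared
Euclidean ground cost) equals the minimum of `R` over all feasible flows. -/
theorem wasserstein_eq_min_flow (N : ℕ) (hN : 0 < N)
    (μ ν : Fin N × Fin N → ℝ)
    (hμ0 : ∀ x, 0 ≤ μ x) (hμ1 : ∑ x, μ x = 1)
    (hν0 : ∀ x, 0 ≤ ν x) (hν1 : ∑ x, ν x = 1) :
    sInf {w : ℝ | ∃ π : Fin N × Fin N → Fin N × Fin N → ℝ,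
        (∀ x y, 0 ≤ π x y) ∧
        (∀ x, ∑ y, π x y = μ x) ∧
        (∀ y, ∑ x, π x y = ν y) ∧
        w = ∑ x : Fin N × Fin N, ∑ y : Fin N × Fin N,
              ((((x.1 : ℕ) : ℝ) - ((y.1 : ℕ) : ℝ)) ^ 2
                + (((x.2 : ℕ) : ℝ) - ((y.2 : ℕ) : ℝ)) ^ 2) * π x y}
      = sInf {r : ℝ | ∃ f1 f2 : Fin N → Fin N → Fin N → ℝ,
        (∀ a i j, 0 ≤ f1 a i j) ∧ (∀ i j b, 0 ≤ f2 i j b) ∧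
        (∀ a j, ∑ i, f1 a i j = μ (a, j)) ∧
        (∀ i b, ∑ j, f2 i j b = ν (i, b)) ∧
        (∀ i j, ∑ a, f1 a i j = ∑ b, f2 i j b) ∧
        r = ∑ i : Fin N, ∑ j : Fin N,
              ((∑ a : Fin N, (((a : ℕ) : ℝ) - ((i : ℕ) : ℝ)) ^ 2 * f1 a i j)
                + ∑ b : Fin N, (((j : ℕ) : ℝ) - ((b : ℕ) : ℝ)) ^ 2 * f2 i j b)} := by
  congr 1
  ext w
  constructor
  · rintro ⟨π, hpos, hμπ, hνπ, rfl⟩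
    refine ⟨fun a i j => ∑ b, π (a, j) (i, b), fun i j b => ∑ a, π (a, j) (i, b),
      fun a i j => Finset.sum_nonneg fun b _ => hpos _ _,
      fun i j b => Finset.sum_nonneg fun a _ => hpos _ _,
      ?_, ?_, ?_, ?_⟩
    · intro a j
      rw [← hμπ (a, j), Fintype.sum_prod_type]
    · intro i b
      rw [← hνπ (i, b), Fintype.sum_prod_type]
      exact Finset.sum_comm
    · intro i j
      exact Finset.sum_comm
    · exact cost_rearrange π
  · rintro ⟨f1, f2, hf1, hf2, hm1, hm2, hbal, rfl⟩
    have hs0 : ∀ i j, (∑ a, f1 a i j) = 0 → (∀ a, f1 a i j = 0) ∧ (∀ b, f2 i j b = 0) := by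
      intro i j h
      refine ⟨fun a => (Finset.sum_eq_zero_iff_of_nonneg
          (fun a _ => hf1 a i j)).mp h a (by simp), fun b => ?_⟩
      have h2 : ∑ b, f2 i j b = 0 := by rw [← hbal i j]; exact h
      exact (Finset.sum_eq_zero_iff_of_nonneg (fun b _ => hf2 i j b)).mp h2 b (by simp)
    have hsnn : ∀ i j, (0:ℝ) ≤ ∑ a, f1 a i j :=
      fun i j => Finset.sum_nonneg fun a _ => hf1 a i j
    set π : Fin N × Fin N → Fin N × Fin N → ℝ := fun x y =>
      if (∑ a, f1 a y.1 x.2) = 0 then 0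
      else f1 x.1 y.1 x.2 * f2 y.1 x.2 y.2 / (∑ a, f1 a y.1 x.2) with hπ
    have K1 : ∀ a i j, ∑ b, π (a, j) (i, b) = f1 a i j := by
      intro a i j
      simp only [hπ]
      by_cases h : (∑ a, f1 a i j) = 0
      · simp [h, (hs0 i j h).1 a]
      · simp only [h, if_false]
        rw [← Finset.sum_div, ← Finset.mul_sum, ← hbal i j, mul_div_assoc, div_self h, mul_one]
    have K2 : ∀ i j b, ∑ a, π (a, j) (i, b) = f2 i j b := by
      intro i j b
      simp only [hπ]
      by_cases h : (∑ a, f1 a i j) = 0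
      · simp [h, (hs0 i j h).2 b]
      · simp only [h, if_false]
        rw [← Finset.sum_div, ← Finset.sum_mul, mul_comm, mul_div_assoc, div_self h, mul_one]
    refine ⟨π, ?_, ?_, ?_, ?_⟩
    · intro x y
      simp only [hπ]
      split
      · exact le_refl 0
      · exact div_nonneg (mul_nonneg (hf1 _ _ _) (hf2 _ _ _)) (hsnn _ _)
    · intro x
      rw [Fintype.sum_prod_type]
      have : ∀ i, ∑ b, π (x.1, x.2) (i, b) = f1 x.1 i x.2 := fun i => K1 x.1 i x.2
      calc ∑ i, ∑ b, π x (i, b) = ∑ i, f1 x.1 i x.2 := by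
            refine Finset.sum_congr rfl fun i _ => ?_
            simpa using this i
        _ = μ x := by rw [hm1 x.1 x.2]
    · intro y
      rw [Fintype.sum_prod_type]
      calc ∑ a, ∑ j, π (a, j) y = ∑ j, ∑ a, π (a, j) y := Finset.sum_comm
        _ = ∑ j, f2 y.1 j y.2 := by
            refine Finset.sum_congr rfl fun j _ => ?_
            simpa using K2 y.1 j y.2
        _ = ν y := by rw [hm2 y.1 y.2]
    · rw [cost_rearrange π]
      refine Finset.sum_congr rfl fun i _ => Finset.sum_congr rfl fun j _ => ?_
      congr 1
      · exact Finset.sum_congr rfl fun a _ => by rw [K1 a i j]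
      · exact Finset.sum_congr rfl fun b _ => by rw [K2 i j b]
end

section
/- Let μ and ν be probability measures on the grid G = {1,…,N}^d and let c be a separable ground cost, c(a,b) = Σ_{i=1}^d Δ_i(a_i,b_i). Then for every transport plan π between μ and ν there exists a flow chart (F₁,…,F_d) between μ and ν such that R(F₁,…,F_d) = Σ_{(a,b)∈G×G} c(a,b) · π(a,b). -/
open Finset

private lemma rotate3 {A B C : Type*} [Fintype A] [Fintype B] [Fintype C]
    (f : A → B → C → ℝ) :
    ∑ x : A, ∑ y : B, ∑ z : C, f x y z = ∑ y : B, ∑ z : C, ∑ x : A, f x y z := by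
  rw [Finset.sum_comm]
  exact Finset.sum_congr rfl fun y _ => Finset.sum_comm

private lemma sum_swap4 {A B C D : Type*} [Fintype A] [Fintype B] [Fintype C] [Fintype D]
    (f : A → B → C → D → ℝ) :
    ∑ x : A, ∑ y : B, ∑ z : C, ∑ w : D, f x y z w
      = ∑ z : C, ∑ w : D, ∑ x : A, ∑ y : B, f x y z w := by
  rw [rotate3 (f := fun x y z => ∑ w, f x y z w),
      rotate3 (f := fun y z x => ∑ w, f x y z w)]
  exact Finset.sum_congr rfl fun z _ => by
    rw [rotate3 (f := fun x y w => f x y z w), rotate3 (f := fun y w x => f x y z w)]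

private lemma collapse {α : Type*} [Fintype α] [DecidableEq α] (p : Prop) [Decidable p]
    (c : α) (v : α → ℝ) :
    ∑ x : α, (if p ∧ c = x then v x else 0) = if p then v c else 0 := by
  by_cases hp : p
  · simp [hp, Finset.sum_ite_eq]
  · simp [hp]



/-- A flow chart between `μ` and `ν` on the grid `{1,…,N}^d`: a `d`-tuple of
nonnegative families `F i : (Fin d → Fin N) → Fin N → ℝ`, where the first argument
`g` of `F i` encodes `(b₁,…,b_{i-1}, a_i,…,a_d)` (coordinates `k < i` hold `b_k`,
coordinates `k ≥ i` hold `a_k`) and the last argument is `b_i`. -/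
def IsFlowChart {N d : ℕ} (μ ν : (Fin d → Fin N) → ℝ)
    (F : Fin d → (Fin d → Fin N) → Fin N → ℝ) : Prop :=
  (∀ i g β, 0 ≤ F i g β) ∧
  (∀ hd : 0 < d, ∀ a : Fin d → Fin N, ∑ β : Fin N, F ⟨0, hd⟩ a β = μ a) ∧
  (∀ hd : 0 < d, ∀ b : Fin d → Fin N,
      ∑ α : Fin N, F ⟨d - 1, Nat.sub_lt hd Nat.one_pos⟩
        (Function.update b ⟨d - 1, Nat.sub_lt hd Nat.one_pos⟩ α)
        (b ⟨d - 1, Nat.sub_lt hd Nat.one_pos⟩) = ν b) ∧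
  (∀ i : Fin d, ∀ hi : (i : ℕ) + 1 < d, ∀ h : Fin d → Fin N,
      ∑ α : Fin N, F i (Function.update h i α) (h i)
        = ∑ β : Fin N, F ⟨(i : ℕ) + 1, hi⟩ h β)

/-- The objective `R(F₁,…,F_d) = ∑ᵢ ∑ Δᵢ(aᵢ,bᵢ) f⁽ⁱ⁾` of a flow chart for the
separable cost with summands `Δ i`. -/
def flowR {N d : ℕ} (Δ : Fin d → Fin N → Fin N → ℝ)
    (F : Fin d → (Fin d → Fin N) → Fin N → ℝ) : ℝ :=
  ∑ i : Fin d, ∑ g : Fin d → Fin N, ∑ β : Fin N, Δ i (g i) β * F i g β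

/-- For every transport plan `π` between probability measures `μ`
and `ν` on the grid `{1,…,N}^d` and every separable cost `c(a,b) = ∑ i, Δ i (a i) (b i)`,
there exists a flow chart `F` between `μ` and `ν` with
`R(F) = ∑ a b, c(a,b) * π a b`. -/
theorem plan_to_flowChart (N d : ℕ) (hN : 0 < N) (hd : 0 < d)
    (μ ν : (Fin d → Fin N) → ℝ)
    (hμ0 : ∀ a, 0 ≤ μ a) (hμ1 : ∑ a, μ a = 1)
    (hν0 : ∀ b, 0 ≤ ν b) (hν1 : ∑ b, ν b = 1)
    (Δ : Fin d → Fin N → Fin N → ℝ) (hΔ : ∀ i x y, 0 ≤ Δ i x y)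
    (π : (Fin d → Fin N) → (Fin d → Fin N) → ℝ)
    (hπ0 : ∀ a b, 0 ≤ π a b)
    (hπμ : ∀ a, ∑ b, π a b = μ a)
    (hπν : ∀ b, ∑ a, π a b = ν b) :
    ∃ F : Fin d → (Fin d → Fin N) → Fin N → ℝ,
      IsFlowChart μ ν F ∧
      flowR Δ F = ∑ a : Fin d → Fin N, ∑ b : Fin d → Fin N,
          (∑ i : Fin d, Δ i (a i) (b i)) * π a b := by
  classical
  set F : Fin d → (Fin d → Fin N) → Fin N → ℝ := fun i g β =>
    ∑ a : Fin d → Fin N, ∑ b : Fin d → Fin N,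
      if (∀ k : Fin d, (k : ℕ) < (i : ℕ) → b k = g k) ∧
          (∀ k : Fin d, (i : ℕ) ≤ (k : ℕ) → a k = g k) ∧ b i = β
        then π a b else 0 with hF
  -- Condition 1: nonnegativity
  have cond1 : ∀ i g β, 0 ≤ F i g β := by
    intro i g β
    simp only [hF]
    refine Finset.sum_nonneg fun a _ => Finset.sum_nonneg fun b _ => ?_
    split_ifs with h
    · exact hπ0 a b
    · exact le_rfl
  -- Condition 2: first marginal
  have cond2 : ∀ hd' : 0 < d, ∀ a : Fin d → Fin N, ∑ β : Fin N, F ⟨0, hd'⟩ a β = μ a := by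
    intro hd' a
    calc ∑ β : Fin N, F ⟨0, hd'⟩ a β
        = ∑ β : Fin N, ∑ a' : Fin d → Fin N, ∑ b : Fin d → Fin N,
            (if a = a' ∧ b ⟨0, hd'⟩ = β then π a' b else 0) := by
          simp only [hF]
          refine Finset.sum_congr rfl fun β _ => Finset.sum_congr rfl fun a' _ =>
            Finset.sum_congr rfl fun b _ => ?_
          refine if_congr ?_ rfl rfl
          constructor
          · rintro ⟨-, h2, h3⟩
            exact ⟨funext fun k => (h2 k (Nat.zero_le _)).symm, h3⟩
          · rintro ⟨rfl, h3⟩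
            exact ⟨fun k hk => absurd hk (Nat.not_lt_zero _), fun k _ => rfl, h3⟩
      _ = ∑ a' : Fin d → Fin N, ∑ b : Fin d → Fin N, ∑ β : Fin N,
            (if a = a' ∧ b ⟨0, hd'⟩ = β then π a' b else 0) := rotate3 _
      _ = ∑ a' : Fin d → Fin N, ∑ b : Fin d → Fin N, (if a = a' then π a' b else 0) := by
          refine Finset.sum_congr rfl fun a' _ => Finset.sum_congr rfl fun b _ => ?_
          rw [collapse]
      _ = ∑ a' : Fin d → Fin N, (if a = a' then ∑ b, π a' b else 0) := by
          refine Finset.sum_congr rfl fun a' _ => ?_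
          split_ifs <;> simp
      _ = ∑ b, π a b := by rw [Finset.sum_ite_eq]; simp
      _ = μ a := hπμ a
  -- Condition 3: last marginal
  have cond3 : ∀ hd' : 0 < d, ∀ b : Fin d → Fin N,
      ∑ α : Fin N, F ⟨d - 1, Nat.sub_lt hd' Nat.one_pos⟩
        (Function.update b ⟨d - 1, Nat.sub_lt hd' Nat.one_pos⟩ α)
        (b ⟨d - 1, Nat.sub_lt hd' Nat.one_pos⟩) = ν b := by
    intro hd' b
    set L : Fin d := ⟨d - 1, Nat.sub_lt hd' Nat.one_pos⟩ with hL
    have step1 : (∑ α : Fin N, F L (Function.update b L α) (b L))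
        = ∑ α : Fin N, ∑ a : Fin d → Fin N, ∑ b' : Fin d → Fin N,
            (if (b = b') ∧ a L = α then π a b' else 0) := by
      simp only [hF]
      refine Finset.sum_congr rfl fun α _ => Finset.sum_congr rfl fun a _ =>
        Finset.sum_congr rfl fun b' _ => ?_
      refine if_congr ?_ rfl rfl
      constructor
      · rintro ⟨h1, h2, h3⟩
        constructor
        · funext k
          rcases lt_or_ge (k : ℕ) (d - 1) with hk | hk
          · have hne : k ≠ L := Fin.ne_of_val_ne (Nat.ne_of_lt hk)
            have := h1 k hk
            rw [Function.update_of_ne hne] at this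
            exact this.symm
          · have hk' : k = L := Fin.ext (show (k : ℕ) = d - 1 by
              have := k.isLt; omega)
            rw [hk']; exact h3.symm
        · have := h2 L le_rfl
          rwa [Function.update_self] at this
      · rintro ⟨rfl, h2⟩
        refine ⟨fun k hk => ?_, fun k hk => ?_, rfl⟩
        · have hne : k ≠ L := Fin.ne_of_val_ne (Nat.ne_of_lt hk)
          rw [Function.update_of_ne hne]
        · have hk2 : d - 1 ≤ (k : ℕ) := hk
          have hk' : k = L := Fin.ext (show (k : ℕ) = d - 1 by
            have := k.isLt; omega)
          subst hk'
          rw [Function.update_self]; exact h2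
    rw [step1, rotate3]
    simp_rw [collapse]
    simp only [Finset.sum_ite_eq, Finset.mem_univ, if_true]
    exact hπν b
  -- Condition 4: compatibility
  have cond4 : ∀ i : Fin d, ∀ hi : (i : ℕ) + 1 < d, ∀ h : Fin d → Fin N,
      ∑ α : Fin N, F i (Function.update h i α) (h i)
        = ∑ β : Fin N, F ⟨(i : ℕ) + 1, hi⟩ h β := by
    intro i hi h
    have hLHS : (∑ α : Fin N, F i (Function.update h i α) (h i))
        = ∑ a : Fin d → Fin N, ∑ b : Fin d → Fin N,
            (if (∀ k : Fin d, (k : ℕ) < (i : ℕ) → b k = h k) ∧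
                (∀ k : Fin d, (i : ℕ) < (k : ℕ) → a k = h k) ∧ b i = h i
              then π a b else 0) := by
      simp only [hF]
      have hiff : ∀ (α : Fin N) (a b : Fin d → Fin N),
          ((∀ k : Fin d, (k : ℕ) < (i : ℕ) → b k = Function.update h i α k) ∧
            (∀ k : Fin d, (i : ℕ) ≤ (k : ℕ) → a k = Function.update h i α k) ∧
            b i = h i)
          ↔ (((∀ k : Fin d, (k : ℕ) < (i : ℕ) → b k = h k) ∧
              (∀ k : Fin d, (i : ℕ) < (k : ℕ) → a k = h k) ∧ b i = h i) ∧
              a i = α) := by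
        intro α a b
        constructor
        · rintro ⟨h1, h2, h3⟩
          refine ⟨⟨fun k hk => ?_, fun k hk => ?_, h3⟩, ?_⟩
          · have := h1 k hk
            rwa [Function.update_of_ne (Fin.ne_of_val_ne (Nat.ne_of_lt hk))] at this
          · have := h2 k (le_of_lt hk)
            rwa [Function.update_of_ne (Fin.ne_of_val_ne (Nat.ne_of_gt hk))] at this
          · have := h2 i le_rfl
            rwa [Function.update_self] at this
        · rintro ⟨⟨g1, g2, g3⟩, g4⟩
          refine ⟨fun k hk => ?_, fun k hk => ?_, g3⟩
          · rw [Function.update_of_ne (Fin.ne_of_val_ne (Nat.ne_of_lt hk))]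
            exact g1 k hk
          · rcases eq_or_lt_of_le hk with he | hlt
            · have hki : k = i := Fin.ext he.symm
              subst hki
              rw [Function.update_self]; exact g4
            · rw [Function.update_of_ne (Fin.ne_of_val_ne (Nat.ne_of_gt hlt))]
              exact g2 k hlt
      simp_rw [hiff]
      rw [rotate3]
      simp_rw [collapse]
    have hRHS : (∑ β : Fin N, F ⟨(i : ℕ) + 1, hi⟩ h β)
        = ∑ a : Fin d → Fin N, ∑ b : Fin d → Fin N,
            (if (∀ k : Fin d, (k : ℕ) < (i : ℕ) + 1 → b k = h k) ∧
                (∀ k : Fin d, (i : ℕ) + 1 ≤ (k : ℕ) → a k = h k)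
              then π a b else 0) := by
      simp only [hF]
      have hiff : ∀ (β : Fin N) (a b : Fin d → Fin N),
          ((∀ k : Fin d, (k : ℕ) < ((⟨(i : ℕ) + 1, hi⟩ : Fin d) : ℕ) → b k = h k) ∧
            (∀ k : Fin d, ((⟨(i : ℕ) + 1, hi⟩ : Fin d) : ℕ) ≤ (k : ℕ) → a k = h k) ∧
            b ⟨(i : ℕ) + 1, hi⟩ = β)
          ↔ (((∀ k : Fin d, (k : ℕ) < (i : ℕ) + 1 → b k = h k) ∧
              (∀ k : Fin d, (i : ℕ) + 1 ≤ (k : ℕ) → a k = h k)) ∧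
              b ⟨(i : ℕ) + 1, hi⟩ = β) := by
        intro β a b
        constructor
        · rintro ⟨h1, h2, h3⟩
          exact ⟨⟨h1, h2⟩, h3⟩
        · rintro ⟨⟨h1, h2⟩, h3⟩
          exact ⟨h1, h2, h3⟩
      simp_rw [hiff]
      rw [rotate3]
      simp_rw [collapse]
    rw [hLHS, hRHS]
    refine Finset.sum_congr rfl fun a _ => Finset.sum_congr rfl fun b _ => ?_
    refine if_congr ?_ rfl rfl
    constructor
    · rintro ⟨p1, p2, p3⟩
      refine ⟨fun k hk => ?_, fun k hk => p2 k (Nat.lt_of_succ_le hk)⟩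
      by_cases hlt : (k : ℕ) < (i : ℕ)
      · exact p1 k hlt
      · have hki : k = i := Fin.ext (by omega)
        rw [hki]; exact p3
    · rintro ⟨q1, q2⟩
      exact ⟨fun k hk => q1 k (Nat.lt_succ_of_lt hk),
        fun k hk => q2 k (Nat.succ_le_of_lt hk),
        q1 i (Nat.lt_succ_self _)⟩
  -- Objective value
  have key : ∀ i : Fin d,
      (∑ g : Fin d → Fin N, ∑ β : Fin N, Δ i (g i) β * F i g β)
        = ∑ a : Fin d → Fin N, ∑ b : Fin d → Fin N, Δ i (a i) (b i) * π a b := by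
    intro i
    have e : ∀ (g : Fin d → Fin N) (β : Fin N), Δ i (g i) β * F i g β
        = ∑ a : Fin d → Fin N, ∑ b : Fin d → Fin N,
            (if ((fun k : Fin d => if (k : ℕ) < (i : ℕ) then b k else a k) = g) ∧ b i = β
              then Δ i (a i) (b i) * π a b else 0) := by
      intro g β
      simp only [hF, Finset.mul_sum]
      refine Finset.sum_congr rfl fun a _ => Finset.sum_congr rfl fun b _ => ?_
      by_cases hc : ((fun k : Fin d => if (k : ℕ) < (i : ℕ) then b k else a k) = g) ∧ b i = β
      · rw [if_pos hc]
        obtain ⟨hg, hβ⟩ := hc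
        have hcond : (∀ k : Fin d, (k : ℕ) < (i : ℕ) → b k = g k) ∧
            (∀ k : Fin d, (i : ℕ) ≤ (k : ℕ) → a k = g k) ∧ b i = β := by
          refine ⟨fun k hk => ?_, fun k hk => ?_, hβ⟩
          · rw [← hg]; exact (if_pos hk).symm
          · rw [← hg]; exact (if_neg (not_lt.mpr hk)).symm
        rw [if_pos hcond]
        have h1 : a i = g i := hcond.2.1 i le_rfl
        rw [← h1, ← hβ]
      · have hnc : ¬((∀ k : Fin d, (k : ℕ) < (i : ℕ) → b k = g k) ∧
            (∀ k : Fin d, (i : ℕ) ≤ (k : ℕ) → a k = g k) ∧ b i = β) := by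
          rintro ⟨h1, h2, h3⟩
          refine hc ⟨funext fun k => ?_, h3⟩
          by_cases hk : (k : ℕ) < (i : ℕ)
          · rw [if_pos hk]; exact h1 k hk
          · rw [if_neg hk]; exact h2 k (not_lt.mp hk)
        rw [if_neg hnc, if_neg hc, mul_zero]
    simp_rw [e]
    rw [sum_swap4]
    simp_rw [collapse]
    simp only [Finset.sum_ite_eq, Finset.mem_univ, if_true]
  have obj : flowR Δ F = ∑ a : Fin d → Fin N, ∑ b : Fin d → Fin N,
      (∑ i : Fin d, Δ i (a i) (b i)) * π a b := by
    simp only [flowR]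
    simp_rw [key]
    rw [rotate3]
    refine Finset.sum_congr rfl fun a _ => Finset.sum_congr rfl fun b _ => ?_
    rw [Finset.sum_mul]
  exact ⟨F, ⟨cond1, cond2, cond3, cond4⟩, obj⟩
end

section
/- Let μ and ν be probability measures on the grid G = {1,…,N}^d and let c be a separable ground cost, c(a,b) = Σ_{i=1}^d Δ_i(a_i,b_i). Then for every flow chart (F₁,…,F_d) between μ and ν there exists a transport plan π between μ and ν such that Σ_{(a,b)∈G×G} c(a,b) · π(a,b) = R(F₁,…,F_d). -/
open Finset

namespace FlowAux

variable {N d : ℕ}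

/-- merge with nat cutoff: coords `< j` from `c`, rest from `a`. -/
def mg (c a : Fin d → Fin N) (j : ℕ) : Fin d → Fin N :=
  fun k => if (k : ℕ) < j then c k else a k

lemma mg_zero (c a : Fin d → Fin N) : mg c a 0 = a := by
  funext k; simp [mg]

lemma mg_top (c a : Fin d → Fin N) : mg c a d = c := by
  funext k; simp [mg, k.isLt]

lemma mg_succ (c a : Fin d → Fin N) (j : ℕ) (hj : j < d) :
    mg c a (j + 1) = Function.update (mg c a j) ⟨j, hj⟩ (c ⟨j, hj⟩) := by
  funext k
  rcases eq_or_ne k ⟨j, hj⟩ with h | h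
  · subst h; simp [mg]
  · have hk : (k : ℕ) ≠ j := fun hk => h (Fin.ext hk)
    rw [Function.update_of_ne h]
    simp only [mg]
    by_cases hlt : (k : ℕ) < j
    · rw [if_pos hlt, if_pos (by omega)]
    · rw [if_neg hlt, if_neg (by omega)]

lemma mg_update_ge (c a : Fin d → Fin N) (j : ℕ) (k : Fin d) (hk : j ≤ (k : ℕ)) (β : Fin N) :
    mg (Function.update c k β) a j = mg c a j := by
  funext l
  by_cases hl : (l : ℕ) < j
  · have hlk : l ≠ k := fun h => by subst h; omega
    simp [mg, hl, Function.update_of_ne hlk]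
  · simp [mg, hl]

lemma invol (j : Fin d) :
    Function.Bijective (fun p : (Fin d → Fin N) × Fin N =>
      (Function.update p.1 j p.2, p.1 j)) :=
  Function.Involutive.bijective (fun p =>
    Prod.ext (by simp [Function.update_idem]) (by simp))

/-- resum over one coordinate -/
lemma resum (j : Fin d) (f : (Fin d → Fin N) → ℝ) :
    ∑ b : Fin d → Fin N, ∑ β : Fin N, f (Function.update b j β)
      = (N : ℝ) * ∑ b : Fin d → Fin N, f b := by
  calc ∑ b : Fin d → Fin N, ∑ β : Fin N, f (Function.update b j β)
      = ∑ p : (Fin d → Fin N) × Fin N, f (Function.update p.1 j p.2) :=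
        (Fintype.sum_prod_type
          (fun p : (Fin d → Fin N) × Fin N => f (Function.update p.1 j p.2))).symm
    _ = ∑ p : (Fin d → Fin N) × Fin N, f p.1 :=
        Fintype.sum_bijective _ (invol j) _ _ (fun p => rfl)
    _ = ∑ b : Fin d → Fin N, ∑ _β : Fin N, f b :=
        Fintype.sum_prod_type (fun p : (Fin d → Fin N) × Fin N => f p.1)
    _ = (N : ℝ) * ∑ b : Fin d → Fin N, f b := by
        simp [Finset.mul_sum, mul_comm]

/-- change of variables -/
lemma cv (j : Fin d) (T : (Fin d → Fin N) → Fin N → ℝ) :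
    ∑ g : Fin d → Fin N, ∑ β : Fin N, T g β
      = ∑ h : Fin d → Fin N, ∑ α : Fin N, T (Function.update h j α) (h j) := by
  calc ∑ g : Fin d → Fin N, ∑ β : Fin N, T g β
      = ∑ p : (Fin d → Fin N) × Fin N, T p.1 p.2 :=
        (Fintype.sum_prod_type (fun p : (Fin d → Fin N) × Fin N => T p.1 p.2)).symm
    _ = ∑ p : (Fin d → Fin N) × Fin N, T (Function.update p.1 j p.2) (p.1 j) :=
        Fintype.sum_bijective _ (invol j) _ _
          (fun p => by simp [Function.update_idem])
    _ = ∑ h : Fin d → Fin N, ∑ α : Fin N, T (Function.update h j α) (h j) :=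
        Fintype.sum_prod_type
          (fun p : (Fin d → Fin N) × Fin N => T (Function.update p.1 j p.2) (p.1 j))

variable {F : Fin d → (Fin d → Fin N) → Fin N → ℝ}

/-- normalized kernel -/
noncomputable def Ker (F : Fin d → (Fin d → Fin N) → Fin N → ℝ) (i : Fin d)
    (g : Fin d → Fin N) (β : Fin N) : ℝ :=
  if (∑ β' : Fin N, F i g β') = 0 then 1 / N else F i g β / (∑ β' : Fin N, F i g β')

lemma Ker_nonneg (hF0 : ∀ i g β, 0 ≤ F i g β) (i : Fin d) (g : Fin d → Fin N) (β : Fin N) :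
    0 ≤ Ker F i g β := by
  unfold Ker
  split
  · positivity
  · exact div_nonneg (hF0 i g β) (Finset.sum_nonneg fun β' _ => hF0 i g β')

lemma Ker_sum (hN : 0 < N) (i : Fin d) (g : Fin d → Fin N) :
    ∑ β : Fin N, Ker F i g β = 1 := by
  unfold Ker
  by_cases h : (∑ β' : Fin N, F i g β') = 0
  · simp only [h, if_true]
    rw [Finset.sum_const, Finset.card_univ, Fintype.card_fin, nsmul_eq_mul]
    field_simp
  · simp only [h, if_false]
    rw [← Finset.sum_div, div_self h]

lemma mul_Ker (hF0 : ∀ i g β, 0 ≤ F i g β) (i : Fin d) (g : Fin d → Fin N) (β : Fin N) :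
    (∑ β' : Fin N, F i g β') * Ker F i g β = F i g β := by
  unfold Ker
  by_cases h : (∑ β' : Fin N, F i g β') = 0
  · simp only [h, if_true, zero_mul]
    exact ((Finset.sum_eq_zero_iff_of_nonneg (fun β' _ => hF0 i g β')).1 h β
      (Finset.mem_univ β)).symm
  · simp only [h, if_false]
    rw [mul_div_cancel₀ _ h]

/-- partial chain measure: `μ(a)` times kernels for coordinates `< j` applied along `c`. -/
noncomputable def rho (μ : (Fin d → Fin N) → ℝ) (F : Fin d → (Fin d → Fin N) → Fin N → ℝ)
    (j : ℕ) (a c : Fin d → Fin N) : ℝ :=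
  μ a * ∏ k ∈ Finset.univ.filter (fun k : Fin d => (k : ℕ) < j),
    Ker F k (mg c a k) (c k)

lemma rho_zero (μ : (Fin d → Fin N) → ℝ) (a c : Fin d → Fin N) :
    rho μ F 0 a c = μ a := by
  unfold rho
  rw [Finset.filter_false_of_mem (fun k _ => by omega), Finset.prod_empty, mul_one]

lemma rho_nonneg (hF0 : ∀ i g β, 0 ≤ F i g β) (μ : (Fin d → Fin N) → ℝ)
    (hμ0 : ∀ a, 0 ≤ μ a) (j : ℕ) (a c : Fin d → Fin N) : 0 ≤ rho μ F j a c :=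
  mul_nonneg (hμ0 a) (Finset.prod_nonneg fun k _ => Ker_nonneg hF0 k _ _)

lemma rho_succ (μ : (Fin d → Fin N) → ℝ) (j : ℕ) (hj : j < d) (a c : Fin d → Fin N) :
    rho μ F (j + 1) a c = rho μ F j a c * Ker F ⟨j, hj⟩ (mg c a j) (c ⟨j, hj⟩) := by
  unfold rho
  have hset : Finset.univ.filter (fun k : Fin d => (k : ℕ) < j + 1)
      = insert (⟨j, hj⟩ : Fin d) (Finset.univ.filter (fun k : Fin d => (k : ℕ) < j)) := by
    ext k
    simp only [Finset.mem_filter, Finset.mem_univ, true_and, Finset.mem_insert]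
    constructor
    · intro h
      rcases Nat.lt_or_ge (k : ℕ) j with h' | h'
      · exact Or.inr (by simpa using h')
      · exact Or.inl (Fin.ext (show (k : ℕ) = j by omega))
    · rintro (rfl | h)
      · exact Nat.lt_succ_self j
      · omega
  have hnot : (⟨j, hj⟩ : Fin d) ∉ Finset.univ.filter (fun k : Fin d => (k : ℕ) < j) := by
    simp only [Finset.mem_filter, Finset.mem_univ, true_and, not_lt]
    exact le_refl j
  rw [hset, Finset.prod_insert hnot]
  ring

lemma rho_update (μ : (Fin d → Fin N) → ℝ) (j : ℕ) (a c : Fin d → Fin N)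
    (k : Fin d) (hk : j ≤ (k : ℕ)) (β : Fin N) :
    rho μ F j a (Function.update c k β) = rho μ F j a c := by
  unfold rho
  congr 1
  refine Finset.prod_congr rfl (fun l hl => ?_)
  simp only [Finset.mem_filter, Finset.mem_univ, true_and] at hl
  have hlk : l ≠ k := fun h => by subst h; omega
  rw [Function.update_of_ne hlk, mg_update_ge c a (l : ℕ) k (by omega) β]

/-- marginal `M j`: entering measure at step `j`, or `ν` at the end. -/
noncomputable def Mj (ν : (Fin d → Fin N) → ℝ) (F : Fin d → (Fin d → Fin N) → Fin N → ℝ)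
    (j : ℕ) (g : Fin d → Fin N) : ℝ :=
  if h : j < d then ∑ β : Fin N, F ⟨j, h⟩ g β else ν g

lemma step (hN : 0 < N) (hd : 0 < d) {μ ν : (Fin d → Fin N) → ℝ}
    (hF : IsFlowChart μ ν F) :
    ∀ j, j ≤ d → ∀ Φ : (Fin d → Fin N) → ℝ,
      ∑ a : Fin d → Fin N, ∑ b : Fin d → Fin N, rho μ F j a b * Φ (mg b a j)
        = (N : ℝ) ^ (d - j) * ∑ g : Fin d → Fin N, Mj ν F j g * Φ g := by
  intro j
  induction j with
  | zero =>
    intro _ Φ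
    have hM : ∀ g, Mj ν F 0 g = μ g := by
      intro g; rw [Mj, dif_pos hd]; exact hF.2.1 hd g
    simp only [rho_zero, mg_zero, hM, Nat.sub_zero]
    rw [Finset.mul_sum]
    refine Finset.sum_congr rfl fun a _ => ?_
    rw [Finset.sum_const, Finset.card_univ, nsmul_eq_mul]
    simp [Fintype.card_fun]
  | succ j ih =>
    intro hj1 Φ
    have hjd : j < d := hj1
    set i : Fin d := ⟨j, hjd⟩ with hi
    set Φ' : (Fin d → Fin N) → ℝ :=
      fun g => ∑ β : Fin N, Ker F i g β * Φ (Function.update g i β) with hΦ'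
    have key : ∀ a : Fin d → Fin N,
        (N : ℝ) * ∑ b : Fin d → Fin N,
            rho μ F (j + 1) a b * Φ (mg b a (j + 1))
          = ∑ b : Fin d → Fin N, rho μ F j a b * Φ' (mg b a j) := by
      intro a
      rw [← resum i (fun b => rho μ F (j + 1) a b * Φ (mg b a (j + 1)))]
      refine Finset.sum_congr rfl fun b _ => ?_
      rw [hΦ', Finset.mul_sum]
      refine Finset.sum_congr rfl fun β _ => ?_
      rw [rho_succ μ j hjd, mg_succ _ a j hjd,
        rho_update μ j a b i (le_refl j) β,
        mg_update_ge b a j i (le_refl j) β, Function.update_self]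
      ring
    have main : (N : ℝ) * (∑ a : Fin d → Fin N, ∑ b : Fin d → Fin N,
          rho μ F (j + 1) a b * Φ (mg b a (j + 1)))
        = (N : ℝ) * ((N : ℝ) ^ (d - (j + 1)) *
            ∑ g : Fin d → Fin N, Mj ν F (j + 1) g * Φ g) := by
      rw [Finset.mul_sum]
      calc ∑ a : Fin d → Fin N, (N : ℝ) * ∑ b : Fin d → Fin N,
              rho μ F (j + 1) a b * Φ (mg b a (j + 1))
          = ∑ a : Fin d → Fin N, ∑ b : Fin d → Fin N,
              rho μ F j a b * Φ' (mg b a j) := Finset.sum_congr rfl fun a _ => key a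
        _ = (N : ℝ) ^ (d - j) * ∑ g : Fin d → Fin N, Mj ν F j g * Φ' g :=
            ih (le_of_lt hjd) Φ'
        _ = (N : ℝ) ^ (d - j) * ∑ g : Fin d → Fin N, ∑ β : Fin N,
              F i g β * Φ (Function.update g i β) := by
            congr 1
            refine Finset.sum_congr rfl fun g _ => ?_
            rw [hΦ', Finset.mul_sum]
            refine Finset.sum_congr rfl fun β _ => ?_
            have hMg : Mj ν F j g = ∑ β' : Fin N, F i g β' := by
              rw [Mj, dif_pos hjd]
            rw [hMg, ← mul_assoc, mul_Ker hF.1 i g β]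
        _ = (N : ℝ) ^ (d - j) * ∑ h : Fin d → Fin N, ∑ α : Fin N,
              F i (Function.update h i α) (h i) * Φ h := by
            rw [cv i (fun g β => F i g β * Φ (Function.update g i β))]
            congr 1
            refine Finset.sum_congr rfl fun h _ => Finset.sum_congr rfl fun α _ => ?_
            rw [Function.update_idem, Function.update_eq_self]
        _ = (N : ℝ) ^ (d - j) * ∑ h : Fin d → Fin N, Mj ν F (j + 1) h * Φ h := by
            congr 1
            refine Finset.sum_congr rfl fun h _ => ?_
            rw [← Finset.sum_mul]
            congr 1
            by_cases hlt : j + 1 < d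
            · rw [Mj, dif_pos hlt]
              exact hF.2.2.2 i hlt h
            · have hjd1 : j + 1 = d := by omega
              rw [Mj, dif_neg hlt]
              have hieq : i = ⟨d - 1, Nat.sub_lt hd Nat.one_pos⟩ :=
                Fin.ext (by show j = d - 1; omega)
              rw [hieq]
              exact hF.2.2.1 hd h
        _ = (N : ℝ) * ((N : ℝ) ^ (d - (j + 1)) *
              ∑ g : Fin d → Fin N, Mj ν F (j + 1) g * Φ g) := by
            have : d - j = (d - (j + 1)) + 1 := by omega
            rw [this, pow_succ]
            ring
    have hNne : (N : ℝ) ≠ 0 := Nat.cast_ne_zero.2 hN.ne'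
    exact mul_left_cancel₀ hNne main

lemma pirho (hN : 0 < N) (hF0 : ∀ i g β, 0 ≤ F i g β) (μ : (Fin d → Fin N) → ℝ) :
    ∀ m, m ≤ d → ∀ (a : Fin d → Fin N) (f : (Fin d → Fin N) → ℝ),
      (∀ (b : Fin d → Fin N) (k : Fin d) (β : Fin N), d - m ≤ (k : ℕ) →
          f (Function.update b k β) = f b) →
      (N : ℝ) ^ m * ∑ b : Fin d → Fin N, rho μ F d a b * f b
        = ∑ b : Fin d → Fin N, rho μ F (d - m) a b * f b := by
  intro m
  induction m with
  | zero => intro _ a f _; simp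
  | succ m ih =>
    intro hm1 a f hf
    have hjd : d - (m + 1) < d := by omega
    set j : ℕ := d - (m + 1) with hj
    have hjm : d - m = j + 1 := by omega
    set i : Fin d := ⟨j, hjd⟩ with hi
    have hf' : ∀ (b : Fin d → Fin N) (k : Fin d) (β : Fin N), d - m ≤ (k : ℕ) →
        f (Function.update b k β) = f b := fun b k β hk => hf b k β (by omega)
    calc (N : ℝ) ^ (m + 1) * ∑ b : Fin d → Fin N, rho μ F d a b * f b
        = (N : ℝ) * ((N : ℝ) ^ m * ∑ b : Fin d → Fin N, rho μ F d a b * f b) := by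
          rw [pow_succ]; ring
      _ = (N : ℝ) * ∑ b : Fin d → Fin N, rho μ F (j + 1) a b * f b := by
          rw [ih (by omega) a f hf', hjm]
      _ = ∑ b : Fin d → Fin N, ∑ β : Fin N,
            rho μ F (j + 1) a (Function.update b i β) * f (Function.update b i β) :=
          (resum i (fun b => rho μ F (j + 1) a b * f b)).symm
      _ = ∑ b : Fin d → Fin N, (rho μ F j a b * f b) *
            ∑ β : Fin N, Ker F i (mg b a j) β := by
          refine Finset.sum_congr rfl fun b _ => ?_
          rw [Finset.mul_sum]
          refine Finset.sum_congr rfl fun β _ => ?_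
          rw [rho_succ μ j hjd, rho_update μ j a b i (le_refl j) β,
            mg_update_ge b a j i (le_refl j) β, Function.update_self,
            hf b i β (show d - (m + 1) ≤ j by omega)]
          ring
      _ = ∑ b : Fin d → Fin N, rho μ F j a b * f b := by
          refine Finset.sum_congr rfl fun b _ => ?_
          rw [Ker_sum hN i (mg b a j), mul_one]

end FlowAux


/-- For every flow chart `F` between probability measures `μ` and
`ν` on the grid `{1,…,N}^d` and every separable cost `c(a,b) = ∑ i, Δ i (a i) (b i)`,
there exists a transport plan `π` between `μ` and `ν` with
`∑ a b, c(a,b) * π a b = R(F)`. -/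
theorem flowChart_to_plan (N d : ℕ) (hN : 0 < N) (hd : 0 < d)
    (μ ν : (Fin d → Fin N) → ℝ)
    (hμ0 : ∀ a, 0 ≤ μ a) (hμ1 : ∑ a, μ a = 1)
    (hν0 : ∀ b, 0 ≤ ν b) (hν1 : ∑ b, ν b = 1)
    (Δ : Fin d → Fin N → Fin N → ℝ) (hΔ : ∀ i x y, 0 ≤ Δ i x y)
    (F : Fin d → (Fin d → Fin N) → Fin N → ℝ)
    (hF : IsFlowChart μ ν F) :
    ∃ π : (Fin d → Fin N) → (Fin d → Fin N) → ℝ,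
      (∀ a b, 0 ≤ π a b) ∧
      (∀ a, ∑ b, π a b = μ a) ∧
      (∀ b, ∑ a, π a b = ν b) ∧
      ∑ a : Fin d → Fin N, ∑ b : Fin d → Fin N,
          (∑ i : Fin d, Δ i (a i) (b i)) * π a b = flowR Δ F := by
  classical
  have hNne : (N : ℝ) ≠ 0 := Nat.cast_ne_zero.2 hN.ne'
  refine ⟨fun a b => FlowAux.rho μ F d a b, ?_, ?_, ?_, ?_⟩
  · exact fun a b => FlowAux.rho_nonneg hF.1 μ hμ0 d a b
  · -- first marginal
    intro a
    have h := FlowAux.pirho hN hF.1 μ d (le_refl d) a (fun _ => 1) (fun _ _ _ _ => rfl)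
    simp only [Nat.sub_self, FlowAux.rho_zero, mul_one] at h
    have hcard : ∑ _b : Fin d → Fin N, μ a = (N : ℝ) ^ d * μ a := by
      rw [Finset.sum_const, Finset.card_univ, nsmul_eq_mul]
      simp [Fintype.card_fun]
    rw [hcard] at h
    exact mul_left_cancel₀ (pow_ne_zero d hNne) h
  · -- second marginal
    intro b₀
    have h := FlowAux.step hN hd hF d (le_refl d) (fun g => if g = b₀ then 1 else 0)
    simp only [FlowAux.mg_top, Nat.sub_self, pow_zero, one_mul] at h
    have hM : ∀ g : Fin d → Fin N, FlowAux.Mj ν F d g = ν g := fun g => by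
      rw [FlowAux.Mj, dif_neg (lt_irrefl d)]
    rw [show (∑ g : Fin d → Fin N, FlowAux.Mj ν F d g *
        (if g = b₀ then (1 : ℝ) else 0)) = ν b₀ by
      simp only [hM, mul_ite, mul_one, mul_zero, Finset.sum_ite_eq',
        Finset.mem_univ, if_true]] at h
    rw [← h]
    refine Finset.sum_congr rfl fun a _ => ?_
    simp only [mul_ite, mul_one, mul_zero, Finset.sum_ite_eq', Finset.mem_univ, if_true]
  · -- the cost identity
    have cost : ∀ i : Fin d,
        ∑ a : Fin d → Fin N, ∑ b : Fin d → Fin N,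
            FlowAux.rho μ F d a b * Δ i (a i) (b i)
          = ∑ g : Fin d → Fin N, ∑ β : Fin N, Δ i (g i) β * F i g β := by
      intro i
      have hjd : (i : ℕ) < d := i.isLt
      set j : ℕ := (i : ℕ) with hj
      set m : ℕ := d - (j + 1) with hm
      have hdm : d - m = j + 1 := by omega
      have hieq : (⟨j, hjd⟩ : Fin d) = i := Fin.ext rfl
      set Ψ : (Fin d → Fin N) → ℝ :=
        fun g => ∑ β : Fin N, FlowAux.Ker F i g β * Δ i (g i) β with hΨ
      have h1 : ∀ a : Fin d → Fin N,
          (N : ℝ) ^ m * ∑ b : Fin d → Fin N, FlowAux.rho μ F d a b * Δ i (a i) (b i)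
            = ∑ b : Fin d → Fin N, FlowAux.rho μ F (j + 1) a b * Δ i (a i) (b i) := by
        intro a
        have hinv : ∀ (b : Fin d → Fin N) (k : Fin d) (β : Fin N), d - m ≤ (k : ℕ) →
            (fun b : Fin d → Fin N => Δ i (a i) (b i)) (Function.update b k β)
              = (fun b : Fin d → Fin N => Δ i (a i) (b i)) b := by
          intro b k β hk
          have hik : i ≠ k := by
            intro hcon
            rw [hdm] at hk
            subst hcon
            omega
          simp only
          rw [Function.update_of_ne hik]
        have := FlowAux.pirho hN hF.1 μ m (by omega) a
          (fun b => Δ i (a i) (b i)) hinv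
        rwa [hdm] at this
      have h2 : ∀ a : Fin d → Fin N,
          (N : ℝ) * ∑ b : Fin d → Fin N, FlowAux.rho μ F (j + 1) a b * Δ i (a i) (b i)
            = ∑ b : Fin d → Fin N, FlowAux.rho μ F j a b * Ψ (FlowAux.mg b a j) := by
        intro a
        rw [← FlowAux.resum i
          (fun b => FlowAux.rho μ F (j + 1) a b * Δ i (a i) (b i))]
        refine Finset.sum_congr rfl fun b _ => ?_
        rw [hΨ, Finset.mul_sum]
        refine Finset.sum_congr rfl fun β _ => ?_
        rw [FlowAux.rho_succ μ j hjd, FlowAux.rho_update μ j a b i (le_refl j) β,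
          FlowAux.mg_update_ge b a j i (le_refl j) β, Function.update_self]
        have hmg : FlowAux.mg b a j i = a i := by
          show (if (i : ℕ) < j then b i else a i) = a i
          rw [if_neg (by omega)]
        rw [hieq, hmg]
        ring
      have h3 := FlowAux.step hN hd hF j (le_of_lt hjd) Ψ
      have h4 : ∑ g : Fin d → Fin N, FlowAux.Mj ν F j g * Ψ g
          = ∑ g : Fin d → Fin N, ∑ β : Fin N, Δ i (g i) β * F i g β := by
        refine Finset.sum_congr rfl fun g _ => ?_
        rw [hΨ, Finset.mul_sum]
        refine Finset.sum_congr rfl fun β _ => ?_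
        rw [FlowAux.Mj, dif_pos hjd, hieq, ← mul_assoc, FlowAux.mul_Ker hF.1 i g β]
        ring
      have hpowne : ((N : ℝ) ^ (m + 1)) ≠ 0 := pow_ne_zero _ hNne
      refine mul_left_cancel₀ hpowne ?_
      calc (N : ℝ) ^ (m + 1) * ∑ a : Fin d → Fin N, ∑ b : Fin d → Fin N,
              FlowAux.rho μ F d a b * Δ i (a i) (b i)
          = ∑ a : Fin d → Fin N, (N : ℝ) *
              ((N : ℝ) ^ m * ∑ b : Fin d → Fin N,
                FlowAux.rho μ F d a b * Δ i (a i) (b i)) := by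
            rw [Finset.mul_sum]
            refine Finset.sum_congr rfl fun a _ => ?_
            rw [pow_succ]
            ring
        _ = ∑ a : Fin d → Fin N, (N : ℝ) * ∑ b : Fin d → Fin N,
              FlowAux.rho μ F (j + 1) a b * Δ i (a i) (b i) := by
            refine Finset.sum_congr rfl fun a _ => ?_
            rw [h1 a]
        _ = ∑ a : Fin d → Fin N, ∑ b : Fin d → Fin N,
              FlowAux.rho μ F j a b * Ψ (FlowAux.mg b a j) :=
            Finset.sum_congr rfl fun a _ => h2 a
        _ = (N : ℝ) ^ (d - j) * ∑ g : Fin d → Fin N, FlowAux.Mj ν F j g * Ψ g := h3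
        _ = (N : ℝ) ^ (m + 1) * ∑ g : Fin d → Fin N, ∑ β : Fin N,
              Δ i (g i) β * F i g β := by
            rw [h4, show d - j = m + 1 by omega]
    calc ∑ a : Fin d → Fin N, ∑ b : Fin d → Fin N,
            (∑ i : Fin d, Δ i (a i) (b i)) * FlowAux.rho μ F d a b
        = ∑ a : Fin d → Fin N, ∑ i : Fin d, ∑ b : Fin d → Fin N,
            FlowAux.rho μ F d a b * Δ i (a i) (b i) := by
          refine Finset.sum_congr rfl fun a _ => ?_
          rw [Finset.sum_comm]
          refine Finset.sum_congr rfl fun b _ => ?_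
          rw [Finset.sum_mul]
          exact Finset.sum_congr rfl fun i _ => mul_comm _ _
      _ = ∑ i : Fin d, ∑ a : Fin d → Fin N, ∑ b : Fin d → Fin N,
            FlowAux.rho μ F d a b * Δ i (a i) (b i) := Finset.sum_comm
      _ = ∑ i : Fin d, ∑ g : Fin d → Fin N, ∑ β : Fin N, Δ i (g i) β * F i g β :=
          Finset.sum_congr rfl fun i _ => cost i
      _ = flowR Δ F := rfl
end

section
/- Let μ and ν be probability measures on the grid G = {1,…,N}^d and let c be a separable ground cost, c(a,b) = Σ_{i=1}^d Δ_i(a_i,b_i). Then 𝓡(μ,ν) = 𝒲_c(μ,ν), i.e. the minimum of R over all flow charts between μ and ν equals the minimum of Σ c·π over all transport plans π between μ and ν. -/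
open Finset Function

lemma sum_update_reparam {N d : ℕ} (k : Fin d) (h : (Fin d → Fin N) → Fin N → ℝ) :
    ∑ g : Fin d → Fin N, ∑ α : Fin N, h (Function.update g k α) (g k)
      = ∑ g : Fin d → Fin N, ∑ β : Fin N, h g β := by
  have e1 := (Fintype.sum_prod_type (f := fun p : (Fin d → Fin N) × Fin N =>
      h (Function.update p.1 k p.2) (p.1 k))).symm
  have e2 := (Fintype.sum_prod_type (f := fun p : (Fin d → Fin N) × Fin N => h p.1 p.2)).symm
  rw [e1, e2]
  exact Fintype.sum_equiv
    ⟨fun p => (Function.update p.1 k p.2, p.1 k),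
     fun p => (Function.update p.1 k p.2, p.1 k),
     fun p => by simp [Function.update_idem],
     fun p => by simp [Function.update_idem]⟩
    _ _ (fun p => rfl)

section B
variable {N d : ℕ}

noncomputable def rowSum (F : Fin d → (Fin d → Fin N) → Fin N → ℝ) (i : Fin d)
    (g : Fin d → Fin N) : ℝ := ∑ β : Fin N, F i g β

noncomputable def ker (F : Fin d → (Fin d → Fin N) → Fin N → ℝ) (i : Fin d)
    (g : Fin d → Fin N) (β : Fin N) : ℝ :=
  if rowSum F i g = 0 then (if β = g i then 1 else 0) else F i g β / rowSum F i g

noncomputable def TT (μ : (Fin d → Fin N) → ℝ) (F : Fin d → (Fin d → Fin N) → Fin N → ℝ) :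
    ℕ → (Fin d → Fin N) → (Fin d → Fin N) → ℝ
  | 0 => fun a g => if g = a then μ a else 0
  | (k+1) => fun a g =>
      if hk : k < d then
        ∑ α : Fin N, TT μ F k a (Function.update g ⟨k, hk⟩ α) *
          ker F ⟨k, hk⟩ (Function.update g ⟨k, hk⟩ α) (g ⟨k, hk⟩)
      else 0

variable {μ ν : (Fin d → Fin N) → ℝ} {F : Fin d → (Fin d → Fin N) → Fin N → ℝ}

lemma ker_nonneg (hF : ∀ i g β, 0 ≤ F i g β) (i : Fin d) (g : Fin d → Fin N) (β : Fin N) :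
    0 ≤ ker F i g β := by
  unfold ker
  split
  · split <;> norm_num
  · exact div_nonneg (hF i g β) (Finset.sum_nonneg fun _ _ => hF i g _)

lemma ker_sum (i : Fin d) (g : Fin d → Fin N) : ∑ β : Fin N, ker F i g β = 1 := by
  unfold ker
  split
  next h => simp
  next h =>
    rw [← Finset.sum_div]
    exact div_self h

lemma rowSum_mul_ker (hF : ∀ i g β, 0 ≤ F i g β) (i : Fin d) (g : Fin d → Fin N) (β : Fin N) :
    rowSum F i g * ker F i g β = F i g β := by
  unfold ker
  split
  next h =>
    rw [h, zero_mul]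
    exact ((Finset.sum_eq_zero_iff_of_nonneg (fun _ _ => hF i g _)).1 h β (mem_univ β)).symm
  next h => field_simp

lemma TT_nonneg (hμ : ∀ a, 0 ≤ μ a) (hF : ∀ i g β, 0 ≤ F i g β) (k : ℕ)
    (a g : Fin d → Fin N) : 0 ≤ TT μ F k a g := by
  induction k generalizing g with
  | zero => unfold TT; split; · exact hμ a
            · exact le_rfl
  | succ k ih =>
    unfold TT
    split
    · exact Finset.sum_nonneg fun α _ => mul_nonneg (ih _) (ker_nonneg hF _ _ _)
    · exact le_rfl

lemma TT_sum_snd (k : ℕ) (hk : k ≤ d) (a : Fin d → Fin N) :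
    ∑ g : Fin d → Fin N, TT μ F k a g = μ a := by
  induction k with
  | zero => simp [TT]
  | succ k ih =>
    have hkd : k < d := hk
    unfold TT
    simp only [dif_pos hkd]
    rw [sum_update_reparam ⟨k, hkd⟩ (fun g β => TT μ F k a g * ker F ⟨k, hkd⟩ g β)]
    calc ∑ g : Fin d → Fin N, ∑ β : Fin N, TT μ F k a g * ker F ⟨k, hkd⟩ g β
        = ∑ g : Fin d → Fin N, TT μ F k a g := by
          refine Finset.sum_congr rfl fun g _ => ?_
          rw [← Finset.mul_sum, ker_sum, mul_one]
      _ = μ a := ih (le_of_lt hkd)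

lemma TT_support (k : ℕ) (a g : Fin d → Fin N) (h : TT μ F k a g ≠ 0) :
    ∀ j : Fin d, k ≤ (j : ℕ) → g j = a j := by
  induction k generalizing g with
  | zero =>
    intro j _
    unfold TT at h
    by_cases hg : g = a
    · rw [hg]
    · simp [hg] at h
  | succ k ih =>
    intro j hj
    unfold TT at h
    split at h
    case isFalse => exact absurd rfl h
    case isTrue hkd =>
      obtain ⟨α, -, hα⟩ := Finset.exists_ne_zero_of_sum_ne_zero h
      have h1 : TT μ F k a (Function.update g ⟨k, hkd⟩ α) ≠ 0 :=
        fun h0 => hα (by rw [h0, zero_mul])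
      have := ih _ h1 j (Nat.le_of_succ_le hj)
      rwa [Function.update_of_ne (by
        intro hjk
        subst hjk
        simp at hj)] at this


lemma TT_sum_fst (hF : IsFlowChart μ ν F) (hd : 0 < d) (k : ℕ) (hk : k ≤ d)
    (g : Fin d → Fin N) :
    ∑ a : Fin d → Fin N, TT μ F k a g =
      if h : k < d then rowSum F ⟨k, h⟩ g else ν g := by
  induction k generalizing g with
  | zero =>
    rw [dif_pos hd]
    simp only [TT]
    rw [Finset.sum_ite_eq Finset.univ g μ]
    simp only [mem_univ, if_pos]
    exact (hF.2.1 hd g).symm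
  | succ k ih =>
    have hkd : k < d := hk
    simp only [TT, dif_pos hkd]
    rw [Finset.sum_comm]
    have step : ∀ α : Fin N,
        ∑ a : Fin d → Fin N, TT μ F k a (Function.update g ⟨k, hkd⟩ α) *
          ker F ⟨k, hkd⟩ (Function.update g ⟨k, hkd⟩ α) (g ⟨k, hkd⟩)
        = F ⟨k, hkd⟩ (Function.update g ⟨k, hkd⟩ α) (g ⟨k, hkd⟩) := by
      intro α
      rw [← Finset.sum_mul, ih (le_of_lt hkd), dif_pos hkd, rowSum_mul_ker hF.1]
    rw [Finset.sum_congr rfl fun α _ => step α]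
    by_cases hk1 : k + 1 < d
    · rw [dif_pos hk1]
      exact hF.2.2.2 ⟨k, hkd⟩ hk1 g
    · have hkeq : k = d - 1 := by omega
      rw [dif_neg hk1]
      have h3 := hF.2.2.1 hd g
      have heq : (⟨d - 1, Nat.sub_lt hd Nat.one_pos⟩ : Fin d) = ⟨k, hkd⟩ :=
        Fin.ext hkeq.symm
      rw [heq] at h3
      exact h3

lemma TT_cost (hF : IsFlowChart μ ν F)
    (Δ : Fin d → Fin N → Fin N → ℝ) (i : Fin d) (k : ℕ) (hik : (i : ℕ) < k) (hk : k ≤ d) :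
    ∑ a : Fin d → Fin N, ∑ g : Fin d → Fin N, Δ i (a i) (g i) * TT μ F k a g
      = ∑ g : Fin d → Fin N, ∑ β : Fin N, Δ i (g i) β * F i g β := by
  induction k with
  | zero => omega
  | succ k ih =>
    have hkd : k < d := hk
    have key : ∀ a : Fin d → Fin N,
        ∑ g : Fin d → Fin N, Δ i (a i) (g i) * TT μ F (k + 1) a g
        = ∑ g : Fin d → Fin N, ∑ β : Fin N,
            Δ i (a i) (if (i : ℕ) = k then β else g i) *
              (TT μ F k a g * ker F ⟨k, hkd⟩ g β) := by
      intro a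
      have h1 : ∀ g : Fin d → Fin N, Δ i (a i) (g i) * TT μ F (k + 1) a g
          = ∑ α : Fin N,
              (fun g' β => Δ i (a i) (if (i : ℕ) = k then β else g' i) *
                (TT μ F k a g' * ker F ⟨k, hkd⟩ g' β))
              (Function.update g ⟨k, hkd⟩ α) (g ⟨k, hkd⟩) := by
        intro g
        simp only [TT, dif_pos hkd, Finset.mul_sum]
        refine Finset.sum_congr rfl fun α _ => ?_
        show _ = Δ i (a i)
            (if (i : ℕ) = k then g ⟨k, hkd⟩ else (Function.update g ⟨k, hkd⟩ α) i) *
          (TT μ F k a (Function.update g ⟨k, hkd⟩ α) *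
            ker F ⟨k, hkd⟩ (Function.update g ⟨k, hkd⟩ α) (g ⟨k, hkd⟩))
        by_cases hik2 : (i : ℕ) = k
        · have hiK : i = (⟨k, hkd⟩ : Fin d) := Fin.ext hik2
          rw [if_pos hik2, hiK]
        · have hne : i ≠ (⟨k, hkd⟩ : Fin d) := fun h => hik2 (by rw [h])
          rw [if_neg hik2, Function.update_of_ne hne]
      rw [Finset.sum_congr rfl fun g _ => h1 g]
      exact sum_update_reparam ⟨k, hkd⟩
        (fun g' β => Δ i (a i) (if (i : ℕ) = k then β else g' i) *
          (TT μ F k a g' * ker F ⟨k, hkd⟩ g' β))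
    rw [Finset.sum_congr rfl fun a _ => key a]
    by_cases hik2 : (i : ℕ) = k
    · -- k = i : base step
      simp only [if_pos hik2]
      have hiK : (⟨k, hkd⟩ : Fin d) = i := Fin.ext hik2.symm
      rw [hiK]
      have hrepl : ∀ a g : Fin d → Fin N, ∀ β : Fin N,
          Δ i (a i) β * (TT μ F k a g * ker F i g β)
          = Δ i (g i) β * (TT μ F k a g * ker F i g β) := by
        intro a g β
        by_cases hT : TT μ F k a g = 0
        · rw [hT]; ring
        · rw [TT_support k a g hT i (le_of_eq hik2.symm)]
      calc ∑ a : Fin d → Fin N, ∑ g : Fin d → Fin N, ∑ β : Fin N,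
              Δ i (a i) β * (TT μ F k a g * ker F i g β)
          = ∑ g : Fin d → Fin N, ∑ β : Fin N,
              Δ i (g i) β * ((∑ a : Fin d → Fin N, TT μ F k a g) * ker F i g β) := by
            rw [Finset.sum_comm]
            refine Finset.sum_congr rfl fun g _ => ?_
            rw [Finset.sum_comm]
            refine Finset.sum_congr rfl fun β _ => ?_
            rw [Finset.sum_congr rfl fun a _ => hrepl a g β, ← Finset.mul_sum,
              ← Finset.sum_mul]
        _ = ∑ g : Fin d → Fin N, ∑ β : Fin N, Δ i (g i) β * F i g β := by
            refine Finset.sum_congr rfl fun g _ => Finset.sum_congr rfl fun β _ => ?_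
            have hd' : 0 < d := lt_of_le_of_lt (Nat.zero_le _) hkd
            rw [TT_sum_fst hF hd' k (le_of_lt hkd) g, dif_pos hkd,
              show (⟨k, hkd⟩ : Fin d) = i from Fin.ext hik2.symm, rowSum_mul_ker hF.1]
    · -- i < k : inductive step
      simp only [if_neg hik2]
      have h2 : ∀ a g : Fin d → Fin N,
          ∑ β : Fin N, Δ i (a i) (g i) * (TT μ F k a g * ker F ⟨k, hkd⟩ g β)
          = Δ i (a i) (g i) * TT μ F k a g := by
        intro a g
        rw [← Finset.mul_sum]
        have : ∑ β : Fin N, TT μ F k a g * ker F ⟨k, hkd⟩ g β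
            = TT μ F k a g := by rw [← Finset.mul_sum, ker_sum, mul_one]
        rw [this]
      rw [Finset.sum_congr rfl fun a _ => Finset.sum_congr rfl fun g _ => h2 a g]
      exact ih (by omega) (le_of_lt hkd)

end B

section A
variable {N d : ℕ}

/-- hybrid: coordinates `< m` from `y`, the rest from `x`. -/
def hyb (m : ℕ) (x y : Fin d → Fin N) : Fin d → Fin N :=
  fun j => if (j : ℕ) < m then y j else x j

noncomputable def mkF (π : (Fin d → Fin N) → (Fin d → Fin N) → ℝ)
    (i : Fin d) (g : Fin d → Fin N) (β : Fin N) : ℝ :=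
  ∑ x : Fin d → Fin N, ∑ y : Fin d → Fin N,
    if g = hyb (i : ℕ) x y ∧ y i = β then π x y else 0

variable {μ ν : (Fin d → Fin N) → ℝ} {π : (Fin d → Fin N) → (Fin d → Fin N) → ℝ}

lemma mkF_isFlowChart (hπ0 : ∀ a b, 0 ≤ π a b)
    (hπμ : ∀ a, ∑ b, π a b = μ a) (hπν : ∀ b, ∑ a, π a b = ν b) :
    IsFlowChart μ ν (mkF π) := by
  refine ⟨fun i g β => Finset.sum_nonneg fun x _ => Finset.sum_nonneg fun y _ => ?_,
    ?_, ?_, ?_⟩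
  · split
    · exact hπ0 x y
    · exact le_rfl
  · -- first marginal
    intro hd a
    unfold mkF
    rw [Finset.sum_comm]
    have h1 : ∀ x : Fin d → Fin N,
        ∑ β : Fin N, ∑ y : Fin d → Fin N,
          (if a = hyb ((⟨0, hd⟩ : Fin d) : ℕ) x y ∧ y ⟨0, hd⟩ = β then π x y else 0)
        = if a = x then μ a else 0 := by
      intro x
      have hhyb : ∀ y : Fin d → Fin N, hyb ((⟨0, hd⟩ : Fin d) : ℕ) x y = x := by
        intro y; funext j; simp [hyb]
      rw [Finset.sum_comm]
      by_cases hax : a = x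
      · subst hax
        simp only [hhyb, if_pos rfl, true_and]
        rw [show μ a = ∑ y, π a y from (hπμ a).symm]
        refine Finset.sum_congr rfl fun y _ => ?_
        rw [Finset.sum_ite_eq Finset.univ (y ⟨0, hd⟩) (fun _ => π a y)]
        simp
      · simp only [hhyb, hax, false_and, if_false, Finset.sum_const_zero, if_neg hax]
    rw [Finset.sum_congr rfl fun x _ => h1 x, Finset.sum_ite_eq Finset.univ a
      (fun _ => μ a)]
    simp
  · -- last marginal
    intro hd b
    set D : Fin d := ⟨d - 1, Nat.sub_lt hd Nat.one_pos⟩ with hD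
    unfold mkF
    have hcond : ∀ (α : Fin N) (x y : Fin d → Fin N),
        (Function.update b D α = hyb (D : ℕ) x y ∧ y D = b D) ↔ (y = b ∧ α = x D) := by
      intro α x y
      constructor
      · rintro ⟨h1, h2⟩
        have hα : α = x D := by
          have := congrFun h1 D
          rwa [Function.update_self, hyb, if_neg (lt_irrefl _)] at this
        refine ⟨funext fun j => ?_, hα⟩
        by_cases hj : j = D
        · rw [hj, h2]
        · have hjd : (j : ℕ) < d - 1 := by
            have := j.isLt
            have : (j : ℕ) ≠ d - 1 := fun h => hj (Fin.ext h)
            omega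
          have := congrFun h1 j
          rw [Function.update_of_ne hj, hyb, if_pos hjd] at this
          exact this.symm
      · rintro ⟨h1, h2⟩
        subst h1; subst h2
        refine ⟨funext fun j => ?_, rfl⟩
        by_cases hj : j = D
        · rw [hj, Function.update_self, hyb, if_neg (lt_irrefl _)]
        · have hjd : (j : ℕ) < d - 1 := by
            have := j.isLt
            have : (j : ℕ) ≠ d - 1 := fun h => hj (Fin.ext h)
            omega
          rw [Function.update_of_ne hj, hyb, if_pos hjd]
    calc ∑ α : Fin N, ∑ x : Fin d → Fin N, ∑ y : Fin d → Fin N,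
            (if Function.update b D α = hyb (D : ℕ) x y ∧ y D = b D then π x y else 0)
        = ∑ α : Fin N, ∑ x : Fin d → Fin N, ∑ y : Fin d → Fin N,
            (if y = b ∧ α = x D then π x y else 0) := by
          refine Finset.sum_congr rfl fun α _ => Finset.sum_congr rfl fun x _ =>
            Finset.sum_congr rfl fun y _ => ?_
          rw [if_congr (hcond α x y) rfl rfl]
      _ = ν b := by
          rw [Finset.sum_comm]
          have h2 : ∀ x : Fin d → Fin N,
              ∑ α : Fin N, ∑ y : Fin d → Fin N,
                (if y = b ∧ α = x D then π x y else 0) = π x b := by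
            intro x
            rw [Finset.sum_comm]
            simp [ite_and, Finset.sum_ite_eq', Finset.sum_ite_eq]
          rw [Finset.sum_congr rfl fun x _ => h2 x, hπν b]
  · -- compatibility
    intro i hi h
    unfold mkF
    have hcond1 : ∀ (α : Fin N) (x y : Fin d → Fin N),
        (Function.update h i α = hyb (i : ℕ) x y ∧ y i = h i)
          ↔ (h = hyb ((i : ℕ) + 1) x y ∧ α = x i) := by
      intro α x y
      constructor
      · rintro ⟨h1, h2⟩
        have hα : α = x i := by
          have := congrFun h1 i
          rwa [Function.update_self, hyb, if_neg (lt_irrefl _)] at this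
        refine ⟨funext fun j => ?_, hα⟩
        by_cases hj : j = i
        · subst hj
          rw [hyb, if_pos (by omega), h2]
        · have := congrFun h1 j
          rw [Function.update_of_ne hj] at this
          rw [this, hyb, hyb]
          have hji : (j : ℕ) ≠ (i : ℕ) := fun hh => hj (Fin.ext hh)
          by_cases hlt : (j : ℕ) < (i : ℕ)
          · rw [if_pos hlt, if_pos (by omega)]
          · rw [if_neg hlt, if_neg (by omega)]
      · rintro ⟨h1, h2⟩
        subst h2
        have h2 : y i = h i := by
          rw [h1, hyb, if_pos (by omega)]
        refine ⟨funext fun j => ?_, h2⟩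
        by_cases hj : j = i
        · subst hj
          rw [Function.update_self, hyb, if_neg (lt_irrefl _)]
        · rw [Function.update_of_ne hj, congrFun h1 j, hyb, hyb]
          have hji : (j : ℕ) ≠ (i : ℕ) := fun hh => hj (Fin.ext hh)
          by_cases hlt : (j : ℕ) < (i : ℕ)
          · rw [if_pos hlt, if_pos (by omega)]
          · rw [if_neg hlt, if_neg (by omega)]
    have hL : ∑ α : Fin N, ∑ x : Fin d → Fin N, ∑ y : Fin d → Fin N,
        (if Function.update h i α = hyb (i : ℕ) x y ∧ y i = h i then π x y else 0)
        = ∑ x : Fin d → Fin N, ∑ y : Fin d → Fin N,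
            (if h = hyb ((i : ℕ) + 1) x y then π x y else 0) := by
      rw [Finset.sum_congr rfl fun α _ => Finset.sum_congr rfl fun x _ =>
        Finset.sum_congr rfl fun y _ => if_congr (hcond1 α x y) rfl rfl]
      rw [Finset.sum_comm]
      refine Finset.sum_congr rfl fun x _ => ?_
      rw [Finset.sum_comm]
      refine Finset.sum_congr rfl fun y _ => ?_
      simp [ite_and, Finset.sum_ite_eq']
    have hR : ∑ β : Fin N, ∑ x : Fin d → Fin N, ∑ y : Fin d → Fin N,
        (if h = hyb (((⟨(i : ℕ) + 1, hi⟩ : Fin d)) : ℕ) x y ∧ y ⟨(i : ℕ) + 1, hi⟩ = β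
          then π x y else 0)
        = ∑ x : Fin d → Fin N, ∑ y : Fin d → Fin N,
            (if h = hyb ((i : ℕ) + 1) x y then π x y else 0) := by
      rw [Finset.sum_comm]
      refine Finset.sum_congr rfl fun x _ => ?_
      rw [Finset.sum_comm]
      refine Finset.sum_congr rfl fun y _ => ?_
      simp [ite_and, Finset.sum_ite_eq]
    rw [hL, ← hR]

lemma mkF_flowR (Δ : Fin d → Fin N → Fin N → ℝ) :
    flowR Δ (mkF π) = ∑ x : Fin d → Fin N, ∑ y : Fin d → Fin N,
      (∑ i : Fin d, Δ i (x i) (y i)) * π x y := by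
  unfold flowR mkF
  have key : ∀ i : Fin d,
      ∑ g : Fin d → Fin N, ∑ β : Fin N, Δ i (g i) β *
        ∑ x : Fin d → Fin N, ∑ y : Fin d → Fin N,
          (if g = hyb (i : ℕ) x y ∧ y i = β then π x y else 0)
      = ∑ x : Fin d → Fin N, ∑ y : Fin d → Fin N, Δ i (x i) (y i) * π x y := by
    intro i
    calc ∑ g : Fin d → Fin N, ∑ β : Fin N, Δ i (g i) β *
            ∑ x : Fin d → Fin N, ∑ y : Fin d → Fin N,
              (if g = hyb (i : ℕ) x y ∧ y i = β then π x y else 0)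
        = ∑ g : Fin d → Fin N, ∑ β : Fin N, ∑ x : Fin d → Fin N, ∑ y : Fin d → Fin N,
            (if g = hyb (i : ℕ) x y ∧ y i = β then Δ i (g i) β * π x y else 0) := by
          refine Finset.sum_congr rfl fun g _ => Finset.sum_congr rfl fun β _ => ?_
          rw [Finset.mul_sum]
          refine Finset.sum_congr rfl fun x _ => ?_
          rw [Finset.mul_sum]
          refine Finset.sum_congr rfl fun y _ => ?_
          rw [mul_ite, mul_zero]
      _ = ∑ g : Fin d → Fin N, ∑ x : Fin d → Fin N, ∑ y : Fin d → Fin N, ∑ β : Fin N,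
            (if g = hyb (i : ℕ) x y ∧ y i = β then Δ i (g i) β * π x y else 0) := by
          refine Finset.sum_congr rfl fun g _ => ?_
          rw [Finset.sum_comm]
          exact Finset.sum_congr rfl fun x _ => Finset.sum_comm
      _ = ∑ g : Fin d → Fin N, ∑ x : Fin d → Fin N, ∑ y : Fin d → Fin N,
            (if g = hyb (i : ℕ) x y then Δ i (g i) (y i) * π x y else 0) := by
          refine Finset.sum_congr rfl fun g _ => Finset.sum_congr rfl fun x _ =>
            Finset.sum_congr rfl fun y _ => ?_
          by_cases hP : g = hyb (i : ℕ) x y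
          · simp [hP, Finset.sum_ite_eq]
          · simp [hP]
      _ = ∑ x : Fin d → Fin N, ∑ y : Fin d → Fin N, ∑ g : Fin d → Fin N,
            (if g = hyb (i : ℕ) x y then Δ i (g i) (y i) * π x y else 0) := by
          rw [Finset.sum_comm]
          exact Finset.sum_congr rfl fun x _ => Finset.sum_comm
      _ = ∑ x : Fin d → Fin N, ∑ y : Fin d → Fin N, Δ i (x i) (y i) * π x y := by
          refine Finset.sum_congr rfl fun x _ => Finset.sum_congr rfl fun y _ => ?_
          rw [Finset.sum_ite_eq' Finset.univ (hyb (i : ℕ) x y)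
            (fun g => Δ i (g i) (y i) * π x y)]
          simp [hyb]
  rw [Finset.sum_congr rfl fun i _ => key i]
  rw [Finset.sum_comm]
  refine Finset.sum_congr rfl fun x _ => ?_
  rw [Finset.sum_comm]
  refine Finset.sum_congr rfl fun y _ => ?_
  rw [Finset.sum_mul]

end A

/-- For probability measures `μ`, `ν` on the grid `{1,…,N}^d` and a
separable cost `c(a,b) = ∑ i, Δ i (a i) (b i)`, the minimum of `R` over flow charts
between `μ` and `ν` equals the minimum transport cost over transport plans between
`μ` and `ν`: `𝓡(μ,ν) = 𝒲_c(μ,ν)`. -/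
theorem flowChart_min_eq_wasserstein (N d : ℕ) (hN : 0 < N) (hd : 0 < d)
    (μ ν : (Fin d → Fin N) → ℝ)
    (hμ0 : ∀ a, 0 ≤ μ a) (hμ1 : ∑ a, μ a = 1)
    (hν0 : ∀ b, 0 ≤ ν b) (hν1 : ∑ b, ν b = 1)
    (Δ : Fin d → Fin N → Fin N → ℝ) (hΔ : ∀ i x y, 0 ≤ Δ i x y) :
    sInf {r : ℝ | ∃ F : Fin d → (Fin d → Fin N) → Fin N → ℝ,
        IsFlowChart μ ν F ∧ r = flowR Δ F}
      = sInf {w : ℝ | ∃ π : (Fin d → Fin N) → (Fin d → Fin N) → ℝ,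
        (∀ a b, 0 ≤ π a b) ∧
        (∀ a, ∑ b, π a b = μ a) ∧
        (∀ b, ∑ a, π a b = ν b) ∧
        w = ∑ a : Fin d → Fin N, ∑ b : Fin d → Fin N,
              (∑ i : Fin d, Δ i (a i) (b i)) * π a b} := by
  congr 1
  ext r
  simp only [Set.mem_setOf_eq]
  constructor
  · rintro ⟨F, hF, rfl⟩
    refine ⟨TT μ F d, fun a b => TT_nonneg hμ0 hF.1 d a b,
      fun a => TT_sum_snd d le_rfl a,
      fun b => by rw [TT_sum_fst hF hd d le_rfl b, dif_neg (lt_irrefl d)], ?_⟩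
    calc flowR Δ F
        = ∑ i : Fin d, ∑ a : Fin d → Fin N, ∑ g : Fin d → Fin N,
            Δ i (a i) (g i) * TT μ F d a g :=
          by
            unfold flowR
            exact Finset.sum_congr rfl fun i _ => (TT_cost hF Δ i d i.isLt le_rfl).symm
      _ = ∑ a : Fin d → Fin N, ∑ b : Fin d → Fin N,
            (∑ i : Fin d, Δ i (a i) (b i)) * TT μ F d a b := by
          rw [Finset.sum_comm]
          refine Finset.sum_congr rfl fun a _ => ?_
          rw [Finset.sum_comm]
          refine Finset.sum_congr rfl fun b _ => ?_
          rw [Finset.sum_mul]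
  · rintro ⟨π, hπ0, hπμ, hπν, rfl⟩
    exact ⟨mkF π, mkF_isFlowChart hπ0 hπμ hπν, (mkF_flowR Δ).symm⟩
end

section
/- Let μ and ν be probability measures on the grid G = {1,…,N}^d and let c be a separable ground cost, c(a,b) = Σ_{i=1}^d Δ_i(a_i,b_i). Then 𝒲_c(μ,ν) ≤ 𝓡(μ,ν): the minimum of Σ c·π over transport plans π between μ and ν is at most the minimum of R over flow charts between μ and ν. -/
open Finset Function

namespace FlowProof

variable {N d : ℕ}

/-! ### glue -/

def glue (i : ℕ) (b c : Fin d → Fin N) : Fin d → Fin N :=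
  fun k => if (k : ℕ) < i then b k else c k

lemma glue_lt {i : ℕ} {b c : Fin d → Fin N} {k : Fin d} (h : (k : ℕ) < i) :
    glue i b c k = b k := if_pos h

lemma glue_ge {i : ℕ} {b c : Fin d → Fin N} {k : Fin d} (h : i ≤ (k : ℕ)) :
    glue i b c k = c k := if_neg (by omega)

lemma glue_zero (b c : Fin d → Fin N) : glue 0 b c = c :=
  funext fun k => if_neg (Nat.not_lt_zero _)

lemma glue_top {i : ℕ} (h : d ≤ i) (b c : Fin d → Fin N) : glue i b c = b :=
  funext fun k => if_pos (lt_of_lt_of_le k.2 h)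

lemma glue_succ_update {i : ℕ} (hi : i < d) (b c : Fin d → Fin N) :
    glue (i+1) (Function.update b ⟨i, hi⟩ (c ⟨i, hi⟩)) c = glue i b c := by
  funext k
  simp only [glue, Function.update_apply, Fin.ext_iff]
  split_ifs <;>
    (first
      | rfl
      | omega
      | exact congrArg Fin.val (congrArg c (Fin.ext (by simp only [Fin.val_mk]; omega)))
      | exact congrArg Fin.val (congrArg b (Fin.ext (by simp only [Fin.val_mk]; omega))))

lemma glue_glue_left {k i : ℕ} (hk : k ≤ i) (x y a : Fin d → Fin N) :
    glue k (glue i x y) a = glue k x a := by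
  funext j
  simp only [glue]
  split_ifs <;> first | rfl | omega

lemma glue_update_right {i : ℕ} {j : Fin d} (h : (j : ℕ) < i) (b c : Fin d → Fin N)
    (x : Fin N) : glue i b (Function.update c j x) = glue i b c := by
  funext k
  simp only [glue, Function.update_apply, Fin.ext_iff]
  split_ifs <;>
    (first
      | rfl
      | omega
      | exact congrArg Fin.val (congrArg c (Fin.ext (by simp only [Fin.val_mk]; omega)))
      | exact congrArg Fin.val (congrArg b (Fin.ext (by simp only [Fin.val_mk]; omega))))

lemma glue_update_left {i : ℕ} {j : Fin d} (h : i ≤ (j : ℕ)) (b c : Fin d → Fin N)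
    (x : Fin N) : glue i (Function.update b j x) c = glue i b c := by
  funext k
  simp only [glue, Function.update_apply, Fin.ext_iff]
  split_ifs <;>
    (first
      | rfl
      | omega
      | exact congrArg Fin.val (congrArg c (Fin.ext (by simp only [Fin.val_mk]; omega)))
      | exact congrArg Fin.val (congrArg b (Fin.ext (by simp only [Fin.val_mk]; omega))))

lemma glue_update_mid {i : ℕ} (hi : i < d) (b a : Fin d → Fin N) (β : Fin N) :
    glue i b (Function.update a ⟨i, hi⟩ β)
      = Function.update (glue (i+1) b a) ⟨i, hi⟩ β := by
  funext k
  simp only [glue, Function.update_apply, Fin.ext_iff]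
  split_ifs <;> first | rfl | omega

lemma glue_succ_left {i : ℕ} (hi : i < d) (c a : Fin d → Fin N) :
    glue (i+1) c a = glue i c (Function.update a ⟨i, hi⟩ (c ⟨i, hi⟩)) := by
  funext k
  simp only [glue, Function.update_apply, Fin.ext_iff]
  split_ifs <;>
    (first
      | rfl
      | omega
      | exact congrArg Fin.val (congrArg c (Fin.ext (by simp only [Fin.val_mk]; omega)))
      | exact congrArg Fin.val (congrArg a (Fin.ext (by simp only [Fin.val_mk]; omega))))

/-! ### reindexing equivalences -/

def glueEquiv (i : ℕ) :
    ((Fin d → Fin N) × (Fin d → Fin N)) ≃ ((Fin d → Fin N) × (Fin d → Fin N)) where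
  toFun p := (glue i p.1 p.2, glue i p.2 p.1)
  invFun p := (glue i p.1 p.2, glue i p.2 p.1)
  left_inv p := by
    ext k <;> by_cases h : (k : ℕ) < i <;> simp [glue, h]
  right_inv p := by
    ext k <;> by_cases h : (k : ℕ) < i <;> simp [glue, h]

lemma sum_glue (i : ℕ) (f : (Fin d → Fin N) → (Fin d → Fin N) → ℝ) :
    ∑ p : (Fin d → Fin N) × (Fin d → Fin N), f (glue i p.1 p.2) (glue i p.2 p.1)
      = ∑ p : (Fin d → Fin N) × (Fin d → Fin N), f p.1 p.2 :=
  Fintype.sum_equiv (glueEquiv i) (fun p => f (glue i p.1 p.2) (glue i p.2 p.1))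
    (fun p => f p.1 p.2) (fun _ => rfl)

def updEquiv (j : Fin d) :
    ((Fin d → Fin N) × Fin N) ≃ ((Fin d → Fin N) × Fin N) where
  toFun p := (Function.update p.1 j p.2, p.1 j)
  invFun p := (Function.update p.1 j p.2, p.1 j)
  left_inv p := by
    simp [Function.update_idem, Function.update_eq_self]
  right_inv p := by
    simp [Function.update_idem, Function.update_eq_self]

lemma count_lemma (j : Fin d) (f : Fin N → ℝ) (Ψ : Fin N → (Fin d → Fin N) → ℝ)
    (hΨ : ∀ β c x, Ψ β (Function.update c j x) = Ψ β c) :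
    (N : ℝ) * ∑ c, f (c j) * Ψ (c j) c = ∑ β, f β * ∑ c, Ψ β c := by
  have h1 : ∑ p : (Fin d → Fin N) × Fin N, f (p.1 j) * Ψ (p.1 j) p.1
      = ∑ p : (Fin d → Fin N) × Fin N, f p.2 * Ψ p.2 p.1 := by
    refine Fintype.sum_equiv (updEquiv j) (fun p => f (p.1 j) * Ψ (p.1 j) p.1)
      (fun p => f p.2 * Ψ p.2 p.1) ?_
    intro p
    show f (p.1 j) * Ψ (p.1 j) p.1 = f (p.1 j) * Ψ (p.1 j) (Function.update p.1 j p.2)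
    rw [hΨ]
  calc (N : ℝ) * ∑ c, f (c j) * Ψ (c j) c
      = ∑ c, ∑ _β : Fin N, f (c j) * Ψ (c j) c := by
        rw [Finset.mul_sum]
        exact Finset.sum_congr rfl fun c _ => by
          rw [Finset.sum_const, card_univ, Fintype.card_fin, nsmul_eq_mul]
    _ = ∑ p : (Fin d → Fin N) × Fin N, f (p.1 j) * Ψ (p.1 j) p.1 := by
        rw [Fintype.sum_prod_type]
    _ = ∑ p : (Fin d → Fin N) × Fin N, f p.2 * Ψ p.2 p.1 := h1
    _ = ∑ β, f β * ∑ c, Ψ β c := by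
        rw [Fintype.sum_prod_type_right]
        exact Finset.sum_congr rfl fun β _ => by rw [Finset.mul_sum]

/-! ### index-set lemmas -/

lemma Ige_insert {i : ℕ} (hi : i < d) :
    univ.filter (fun k : Fin d => i ≤ (k : ℕ))
      = insert (⟨i, hi⟩ : Fin d) (univ.filter (fun k : Fin d => i + 1 ≤ (k : ℕ))) := by
  ext k
  simp only [mem_filter, mem_univ, true_and, mem_insert, Fin.ext_iff]
  omega

lemma notMem_Ige {i : ℕ} (hi : i < d) :
    (⟨i, hi⟩ : Fin d) ∉ univ.filter (fun k : Fin d => i + 1 ≤ (k : ℕ)) := by simp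

lemma Ilt_insert {i : ℕ} (hi : i < d) :
    univ.filter (fun k : Fin d => (k : ℕ) < i + 1)
      = insert (⟨i, hi⟩ : Fin d) (univ.filter (fun k : Fin d => (k : ℕ) < i)) := by
  ext k
  simp only [mem_filter, mem_univ, true_and, mem_insert, Fin.ext_iff]
  omega

lemma notMem_Ilt {i : ℕ} (hi : i < d) :
    (⟨i, hi⟩ : Fin d) ∉ univ.filter (fun k : Fin d => (k : ℕ) < i) := by simp

lemma Ige_zero : univ.filter (fun k : Fin d => 0 ≤ (k : ℕ)) = univ := by simp

lemma Ige_top : univ.filter (fun k : Fin d => d ≤ (k : ℕ)) = ∅ := by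
  ext k; simp [Nat.not_le.2 k.2]

lemma Ilt_zero : univ.filter (fun k : Fin d => (k : ℕ) < 0) = ∅ := by simp

lemma Ilt_top : univ.filter (fun k : Fin d => (k : ℕ) < d) = univ := by
  ext k; simp [k.2]

lemma card_fun_real : ((Fintype.card (Fin d → Fin N) : ℕ) : ℝ) = (N : ℝ) ^ d := by
  rw [Fintype.card_fun, Fintype.card_fin, Fintype.card_fin]; push_cast; ring

/-! ### m, q -/

def mf (ν : (Fin d → Fin N) → ℝ) (F : Fin d → (Fin d → Fin N) → Fin N → ℝ)
    (i : ℕ) (h : Fin d → Fin N) : ℝ :=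
  if hi : i < d then ∑ β, F ⟨i, hi⟩ h β else ν h

def Ff (F : Fin d → (Fin d → Fin N) → Fin N → ℝ) (i : ℕ) (h : Fin d → Fin N)
    (β : Fin N) : ℝ :=
  if hi : i < d then F ⟨i, hi⟩ h β else 0

noncomputable def qf (ν : (Fin d → Fin N) → ℝ) (F : Fin d → (Fin d → Fin N) → Fin N → ℝ)
    (i : ℕ) (h : Fin d → Fin N) (β : Fin N) : ℝ :=
  if mf ν F i h = 0 then (N : ℝ)⁻¹ else Ff F i h β / mf ν F i h

variable {μ ν : (Fin d → Fin N) → ℝ} {F : Fin d → (Fin d → Fin N) → Fin N → ℝ}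

lemma Ff_nonneg (h1 : ∀ i g β, 0 ≤ F i g β) (i : ℕ) (h : Fin d → Fin N) (β : Fin N) :
    0 ≤ Ff F i h β := by
  unfold Ff; split
  · exact h1 _ _ _
  · exact le_refl _

lemma mf_nonneg (h1 : ∀ i g β, 0 ≤ F i g β) (hν0 : ∀ b, 0 ≤ ν b) (i : ℕ)
    (h : Fin d → Fin N) : 0 ≤ mf ν F i h := by
  unfold mf; split
  · exact Finset.sum_nonneg fun β _ => h1 _ _ _
  · exact hν0 h

lemma sum_Ff {i : ℕ} (hi : i < d) (h : Fin d → Fin N) :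
    ∑ β, Ff F i h β = mf ν F i h := by
  simp [Ff, mf, dif_pos hi]

lemma qf_nonneg (h1 : ∀ i g β, 0 ≤ F i g β) (hν0 : ∀ b, 0 ≤ ν b) (i : ℕ)
    (h : Fin d → Fin N) (β : Fin N) : 0 ≤ qf ν F i h β := by
  unfold qf; split
  · positivity
  · exact div_nonneg (Ff_nonneg h1 _ _ _) (mf_nonneg h1 hν0 _ _)

lemma sum_qf (hN : 0 < N) {i : ℕ} (hi : i < d) (h : Fin d → Fin N) :
    ∑ β, qf ν F (N := N) i h β = 1 := by
  unfold qf
  by_cases h0 : mf ν F i h = 0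
  · simp only [h0, if_true]
    rw [Finset.sum_const, card_univ, Fintype.card_fin, nsmul_eq_mul]
    exact mul_inv_cancel₀ (by exact_mod_cast hN.ne')
  · simp only [h0, if_false]
    rw [← Finset.sum_div, sum_Ff hi, div_self h0]

lemma mf_mul_qf (h1 : ∀ i g β, 0 ≤ F i g β) {i : ℕ} (hi : i < d)
    (h : Fin d → Fin N) (β : Fin N) :
    mf ν F i h * qf ν F i h β = Ff F i h β := by
  unfold qf
  by_cases h0 : mf ν F i h = 0
  · simp only [h0, if_true, zero_mul]
    exact ((Finset.sum_eq_zero_iff_of_nonneg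
      (fun β _ => Ff_nonneg (F := F) h1 i h β)).1 ((sum_Ff hi h).trans h0) β
      (mem_univ β)).symm
  · simp only [h0, if_false]
    rw [mul_comm, div_mul_cancel₀ _ h0]

lemma mf_zero (hd : 0 < d) (hF : IsFlowChart μ ν F) (h : Fin d → Fin N) :
    mf ν F 0 h = μ h := by
  rw [mf, dif_pos hd]
  exact hF.2.1 hd h

lemma mf_step (hd : 0 < d) (hF : IsFlowChart μ ν F) {i : ℕ} (hi : i < d)
    (h : Fin d → Fin N) :
    ∑ α, F ⟨i, hi⟩ (Function.update h ⟨i, hi⟩ α) (h ⟨i, hi⟩) = mf ν F (i + 1) h := by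
  by_cases hi1 : i + 1 < d
  · rw [mf, dif_pos hi1]
    exact hF.2.2.2 ⟨i, hi⟩ hi1 h
  · have hieq : i = d - 1 := by omega
    subst hieq
    rw [mf, dif_neg hi1]
    exact hF.2.2.1 hd h

/-! ### Induction A -/

lemma lemA (hN : 0 < N) :
    ∀ n i, i + n = d → ∀ a b : Fin d → Fin N,
      ∑ c, ∏ k ∈ univ.filter (fun k : Fin d => i ≤ (k : ℕ)),
          qf ν F (k : ℕ) (glue (k : ℕ) (glue i b c) a) (glue i b c k) = (N : ℝ) ^ i := by
  intro n
  induction n with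
  | zero =>
    intro i hid a b
    have hid' : i = d := by omega
    subst hid'
    rw [Ige_top]
    simp only [Finset.prod_empty]
    rw [Finset.sum_const, card_univ, nsmul_eq_mul, mul_one, card_fun_real]
  | succ n ih =>
    intro i hid a b
    have hi : i < d := by omega
    have hNne : (N : ℝ) ≠ 0 := by exact_mod_cast hN.ne'
    set li : Fin d := ⟨i, hi⟩ with hli
    set f : Fin N → ℝ := fun β => qf ν F i (glue i b a) β with hf
    set Ψ : Fin N → (Fin d → Fin N) → ℝ := fun β c =>
      ∏ k ∈ univ.filter (fun k : Fin d => i + 1 ≤ (k : ℕ)),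
        qf ν F (k : ℕ) (glue (k : ℕ) (glue (i+1) (Function.update b li β) c) a)
          (glue (i+1) (Function.update b li β) c k) with hΨdef
    have hsummand : ∀ c : Fin d → Fin N,
        (∏ k ∈ univ.filter (fun k : Fin d => i ≤ (k : ℕ)),
          qf ν F (k : ℕ) (glue (k : ℕ) (glue i b c) a) (glue i b c k))
        = f (c li) * Ψ (c li) c := by
      intro c
      rw [Ige_insert hi, Finset.prod_insert (notMem_Ige hi)]
      congr 1
      · show qf ν F i (glue i (glue i b c) a) (glue i b c li) = f (c li)
        rw [glue_glue_left (le_refl i), glue_ge (le_refl i)]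
      · show _ = Ψ (c li) c
        rw [hΨdef]
        refine Finset.prod_congr rfl fun k hk => ?_
        rw [glue_succ_update hi b c]
    have hΨupd : ∀ β c x, Ψ β (Function.update c li x) = Ψ β c := by
      intro β c x
      rw [hΨdef]
      refine Finset.prod_congr rfl fun k hk => ?_
      rw [glue_update_right (show (li : ℕ) < i + 1 from Nat.lt_succ_self i)]
    have key : (N : ℝ) * ∑ c, f (c li) * Ψ (c li) c = ∑ β, f β * ∑ c, Ψ β c :=
      count_lemma li f Ψ hΨupd
    have hΨsum : ∀ β, ∑ c, Ψ β c = (N : ℝ) ^ (i + 1) := by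
      intro β
      exact ih (i + 1) (by omega) a (Function.update b li β)
    have hfsum : ∑ β, f β = 1 := sum_qf hN hi (glue i b a)
    have hmain : (N : ℝ) * ∑ c, f (c li) * Ψ (c li) c = (N : ℝ) * (N : ℝ) ^ i := by
      rw [key]
      calc ∑ β, f β * ∑ c, Ψ β c
          = ∑ β, f β * (N : ℝ) ^ (i + 1) := by
            exact Finset.sum_congr rfl fun β _ => by rw [hΨsum β]
        _ = (∑ β, f β) * (N : ℝ) ^ (i + 1) := by rw [← Finset.sum_mul]
        _ = (N : ℝ) * (N : ℝ) ^ i := by rw [hfsum, one_mul, pow_succ]; ring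
    have := mul_left_cancel₀ hNne hmain
    calc ∑ c, ∏ k ∈ univ.filter (fun k : Fin d => i ≤ (k : ℕ)),
          qf ν F (k : ℕ) (glue (k : ℕ) (glue i b c) a) (glue i b c k)
        = ∑ c, f (c li) * Ψ (c li) c := Finset.sum_congr rfl fun c _ => hsummand c
      _ = (N : ℝ) ^ i := this

end FlowProof

namespace FlowProof2
open FlowProof

variable {N d : ℕ} {μ ν : (Fin d → Fin N) → ℝ} {F : Fin d → (Fin d → Fin N) → Fin N → ℝ}

lemma glue_glue_right {k i : ℕ} (h : i ≤ k) (b x y : Fin d → Fin N) :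
    glue k b (glue i x y) = glue k b y := by
  funext j
  simp only [glue]
  split_ifs <;> first | rfl | omega

lemma lemB (hN : 0 < N) (hd : 0 < d) (hF : IsFlowChart μ ν F) :
    ∀ i, i ≤ d → ∀ a b : Fin d → Fin N,
      (N : ℝ) ^ i * ∑ c, μ (glue i c a) *
          ∏ k ∈ univ.filter (fun k : Fin d => (k : ℕ) < i),
            qf ν F (k : ℕ) (glue (k : ℕ) b (glue i c a)) (b k)
        = (N : ℝ) ^ d * mf ν F i (glue i b a) := by
  intro i
  induction i with
  | zero =>
    intro _ a b
    rw [Ilt_zero]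
    simp only [Finset.prod_empty, mul_one, pow_zero, one_mul]
    rw [mf_zero hd hF, glue_zero b a]
    have : ∀ c : Fin d → Fin N, μ (glue 0 c a) = μ a := fun c => by rw [glue_zero]
    rw [Finset.sum_congr rfl fun c _ => this c, Finset.sum_const, card_univ,
      nsmul_eq_mul, card_fun_real]
  | succ i ih =>
    intro hid a b
    have hi : i < d := by omega
    set li : Fin d := ⟨i, hi⟩ with hli
    set h : Fin d → Fin N := glue (i+1) b a with hh
    set f : Fin N → ℝ := fun β => qf ν F i (Function.update h li β) (b li) with hf
    set Ψ : Fin N → (Fin d → Fin N) → ℝ := fun β c =>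
      μ (glue i c (Function.update a li β)) *
        ∏ k ∈ univ.filter (fun k : Fin d => (k : ℕ) < i),
          qf ν F (k : ℕ) (glue (k : ℕ) b (glue i c (Function.update a li β))) (b k)
      with hΨdef
    have hsummand : ∀ c : Fin d → Fin N,
        μ (glue (i+1) c a) *
          ∏ k ∈ univ.filter (fun k : Fin d => (k : ℕ) < i + 1),
            qf ν F (k : ℕ) (glue (k : ℕ) b (glue (i+1) c a)) (b k)
        = f (c li) * Ψ (c li) c := by
      intro c
      rw [glue_succ_left hi c a, Ilt_insert hi, Finset.prod_insert (notMem_Ilt hi)]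
      have hq : qf ν F (li : ℕ) (glue (li : ℕ) b (glue i c (Function.update a li (c li))))
          (b li) = f (c li) := by
        show qf ν F i (glue i b (glue i c (Function.update a li (c li)))) (b li) = _
        rw [glue_glue_right (le_refl i), glue_update_mid hi]
      rw [hq, hΨdef]
      ring
    have hΨupd : ∀ β c x, Ψ β (Function.update c li x) = Ψ β c := by
      intro β c x
      rw [hΨdef]
      simp only
      rw [glue_update_left (le_refl i) c _ x]
    have key : (N : ℝ) * ∑ c, f (c li) * Ψ (c li) c = ∑ β, f β * ∑ c, Ψ β c :=
      count_lemma li f Ψ hΨupd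
    have hΨsum : ∀ β, (N : ℝ) ^ i * ∑ c, Ψ β c
        = (N : ℝ) ^ d * mf ν F i (Function.update h li β) := by
      intro β
      have := ih (by omega) (Function.update a li β) b
      rwa [glue_update_mid hi] at this
    have hFstep : ∑ β, mf ν F i (Function.update h li β) * f β = mf ν F (i+1) h := by
      rw [← mf_step hd hF hi h]
      refine Finset.sum_congr rfl fun β _ => ?_
      rw [hf]
      simp only
      rw [mf_mul_qf hF.1 hi, Ff, dif_pos hi]
      congr 1
      exact (glue_lt (Nat.lt_succ_self i)).symm
    calc (N : ℝ) ^ (i+1) * ∑ c, μ (glue (i+1) c a) *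
          ∏ k ∈ univ.filter (fun k : Fin d => (k : ℕ) < i + 1),
            qf ν F (k : ℕ) (glue (k : ℕ) b (glue (i+1) c a)) (b k)
        = (N : ℝ) ^ i * ((N : ℝ) * ∑ c, f (c li) * Ψ (c li) c) := by
          rw [Finset.sum_congr rfl fun c _ => hsummand c, pow_succ]
          ring
      _ = (N : ℝ) ^ i * ∑ β, f β * ∑ c, Ψ β c := by rw [key]
      _ = ∑ β, f β * ((N : ℝ) ^ i * ∑ c, Ψ β c) := by
          rw [Finset.mul_sum]
          exact Finset.sum_congr rfl fun β _ => by ring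
      _ = ∑ β, f β * ((N : ℝ) ^ d * mf ν F i (Function.update h li β)) := by
          exact Finset.sum_congr rfl fun β _ => by rw [hΨsum β]
      _ = (N : ℝ) ^ d * ∑ β, mf ν F i (Function.update h li β) * f β := by
          rw [Finset.mul_sum]
          exact Finset.sum_congr rfl fun β _ => by ring
      _ = (N : ℝ) ^ d * mf ν F (i+1) h := by rw [hFstep]

end FlowProof2

namespace FlowProof3
open FlowProof FlowProof2

variable {N d : ℕ} {μ ν : (Fin d → Fin N) → ℝ} {F : Fin d → (Fin d → Fin N) → Fin N → ℝ}

noncomputable def pf (μ ν : (Fin d → Fin N) → ℝ) (F : Fin d → (Fin d → Fin N) → Fin N → ℝ)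
    (a b : Fin d → Fin N) : ℝ :=
  μ a * ∏ k : Fin d, qf ν F (k : ℕ) (glue (k : ℕ) b a) (b k)

lemma pf_nonneg (hμ0 : ∀ a, 0 ≤ μ a) (hν0 : ∀ b, 0 ≤ ν b)
    (h1 : ∀ i g β, 0 ≤ F i g β) (a b : Fin d → Fin N) : 0 ≤ pf μ ν F a b :=
  mul_nonneg (hμ0 a) (Finset.prod_nonneg fun k _ => qf_nonneg h1 hν0 _ _ _)

lemma pf_marg1 (hN : 0 < N) (a : Fin d → Fin N) :
    ∑ b, pf μ ν F a b = μ a := by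
  have hA := lemA (F := F) (ν := ν) hN d 0 (by omega) a a
  rw [Ige_zero] at hA
  have hA' : ∑ c : Fin d → Fin N, ∏ k : Fin d, qf ν F (k : ℕ) (glue (k : ℕ) c a) (c k)
      = 1 := by
    rw [← pow_zero (N : ℝ), ← hA]
    refine Finset.sum_congr rfl fun c _ => Finset.prod_congr rfl fun k _ => ?_
    rw [glue_zero a c]
  unfold pf
  rw [← Finset.mul_sum, hA', mul_one]

lemma pf_marg2 (hN : 0 < N) (hd : 0 < d) (hF : IsFlowChart μ ν F)
    (b : Fin d → Fin N) : ∑ a, pf μ ν F a b = ν b := by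
  have hNdne : ((N : ℝ) ^ d) ≠ 0 := pow_ne_zero _ (by exact_mod_cast hN.ne')
  have hB := lemB hN hd hF d (le_refl d) b b
  rw [Ilt_top] at hB
  have h2 : mf ν F d (glue d b b) = ν b := by
    rw [glue_top (le_refl d), mf, dif_neg (lt_irrefl d)]
  rw [h2] at hB
  have hB' : ∑ c : Fin d → Fin N,
      μ (glue d c b) * ∏ k : Fin d, qf ν F (k : ℕ) (glue (k : ℕ) b (glue d c b)) (b k)
      = ∑ a, pf μ ν F a b := by
    refine Finset.sum_congr rfl fun c _ => ?_
    rw [glue_top (le_refl d) c b]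
    rfl
  rw [hB'] at hB
  exact mul_left_cancel₀ hNdne hB

end FlowProof3

namespace FlowProof4
open FlowProof FlowProof2 FlowProof3

variable {N d : ℕ} {μ ν : (Fin d → Fin N) → ℝ} {F : Fin d → (Fin d → Fin N) → Fin N → ℝ}

lemma sum_fst (hN : 0 < N) (X : (Fin d → Fin N) → ℝ) :
    ∑ p : (Fin d → Fin N) × (Fin d → Fin N), X p.1 = (N : ℝ) ^ d * ∑ b, X b := by
  rw [Fintype.sum_prod_type]
  calc ∑ x : Fin d → Fin N, ∑ _y : Fin d → Fin N, X x
      = ∑ x : Fin d → Fin N, (N : ℝ) ^ d * X x := by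
        refine Finset.sum_congr rfl fun x _ => ?_
        rw [Finset.sum_const, card_univ, nsmul_eq_mul, card_fun_real]
    _ = (N : ℝ) ^ d * ∑ x, X x := by rw [← Finset.mul_sum]

lemma filter_not_lt (i : ℕ) :
    univ.filter (fun k : Fin d => ¬ (k : ℕ) < i)
      = univ.filter (fun k : Fin d => i ≤ (k : ℕ)) := by
  ext k; simp [Nat.not_lt]

lemma pf_cost (hN : 0 < N) (hd : 0 < d) (hF : IsFlowChart μ ν F)
    (Δ : Fin d → Fin N → Fin N → ℝ) (i : Fin d) :
    ∑ a, ∑ b, Δ i (a i) (b i) * pf μ ν F a b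
      = ∑ g, ∑ β, Δ i (g i) β * F i g β := by
  have hi : (i : ℕ) < d := i.2
  have hNne : (N : ℝ) ≠ 0 := by exact_mod_cast hN.ne'
  set iN : ℕ := (i : ℕ) with hiN
  set T : ℝ := ∑ a, ∑ b, Δ i (a i) (b i) * pf μ ν F a b with hT
  set T' : ℝ := ∑ a, ∑ b, Δ i (a i) (b i) *
      (μ a * ∏ k ∈ univ.filter (fun k : Fin d => (k : ℕ) < iN + 1),
        qf ν F (k : ℕ) (glue (k : ℕ) b a) (b k)) with hT'
  set U : ℝ := ∑ b, ∑ a, Δ i (a i) (b i) * Ff F iN (glue iN b a) (b i) with hU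
  set Ri : ℝ := ∑ g, ∑ β, Δ i (g i) β * F i g β with hRi
  have h1 : (N : ℝ) ^ d * T = (N : ℝ) ^ (iN + 1) * T' := by
    have step1 : ∀ a : Fin d → Fin N,
        (N : ℝ) ^ d * ∑ b, Δ i (a i) (b i) * pf μ ν F a b
        = (N : ℝ) ^ (iN + 1) * ∑ b, Δ i (a i) (b i) *
            (μ a * ∏ k ∈ univ.filter (fun k : Fin d => (k : ℕ) < iN + 1),
              qf ν F (k : ℕ) (glue (k : ℕ) b a) (b k)) := by
      intro a
      calc (N : ℝ) ^ d * ∑ b, Δ i (a i) (b i) * pf μ ν F a b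
          = ∑ p : (Fin d → Fin N) × (Fin d → Fin N),
              Δ i (a i) (p.1 i) * pf μ ν F a p.1 :=
            (sum_fst hN _).symm
        _ = ∑ p : (Fin d → Fin N) × (Fin d → Fin N),
              Δ i (a i) ((glue (iN+1) p.1 p.2) i) * pf μ ν F a (glue (iN+1) p.1 p.2) :=
            (sum_glue (iN+1) (fun u _ => Δ i (a i) (u i) * pf μ ν F a u)).symm
        _ = ∑ p : (Fin d → Fin N) × (Fin d → Fin N),
              (Δ i (a i) (p.1 i) *
                (μ a * ∏ k ∈ univ.filter (fun k : Fin d => (k : ℕ) < iN + 1),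
                  qf ν F (k : ℕ) (glue (k : ℕ) p.1 a) (p.1 k))) *
              ∏ k ∈ univ.filter (fun k : Fin d => iN + 1 ≤ (k : ℕ)),
                qf ν F (k : ℕ) (glue (k : ℕ) (glue (iN+1) p.1 p.2) a)
                  (glue (iN+1) p.1 p.2 k) := by
            refine Finset.sum_congr rfl fun p _ => ?_
            rw [show (glue (iN+1) p.1 p.2) i = p.1 i from glue_lt (Nat.lt_succ_self iN)]
            unfold pf
            rw [← Finset.prod_filter_mul_prod_filter_not univ
              (fun k : Fin d => (k : ℕ) < iN + 1), filter_not_lt]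
            have hfirst : ∏ k ∈ univ.filter (fun k : Fin d => (k : ℕ) < iN + 1),
                qf ν F (k : ℕ) (glue (k : ℕ) (glue (iN+1) p.1 p.2) a)
                  (glue (iN+1) p.1 p.2 k)
                = ∏ k ∈ univ.filter (fun k : Fin d => (k : ℕ) < iN + 1),
                  qf ν F (k : ℕ) (glue (k : ℕ) p.1 a) (p.1 k) := by
              refine Finset.prod_congr rfl fun k hk => ?_
              have hk' : (k : ℕ) < iN + 1 := by
                simpa using (Finset.mem_filter.1 hk).2
              rw [glue_glue_left (by omega : (k : ℕ) ≤ iN + 1), glue_lt hk']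
            rw [hfirst]
            ring
        _ = ∑ b : Fin d → Fin N, ∑ c : Fin d → Fin N,
              (Δ i (a i) (b i) *
                (μ a * ∏ k ∈ univ.filter (fun k : Fin d => (k : ℕ) < iN + 1),
                  qf ν F (k : ℕ) (glue (k : ℕ) b a) (b k))) *
              ∏ k ∈ univ.filter (fun k : Fin d => iN + 1 ≤ (k : ℕ)),
                qf ν F (k : ℕ) (glue (k : ℕ) (glue (iN+1) b c) a)
                  (glue (iN+1) b c k) := by
            rw [Fintype.sum_prod_type]
        _ = ∑ b : Fin d → Fin N,
              (Δ i (a i) (b i) *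
                (μ a * ∏ k ∈ univ.filter (fun k : Fin d => (k : ℕ) < iN + 1),
                  qf ν F (k : ℕ) (glue (k : ℕ) b a) (b k))) * (N : ℝ) ^ (iN + 1) := by
            refine Finset.sum_congr rfl fun b _ => ?_
            rw [← Finset.mul_sum, lemA hN (d - (iN+1)) (iN+1) (by omega) a b]
        _ = (N : ℝ) ^ (iN + 1) * ∑ b, Δ i (a i) (b i) *
              (μ a * ∏ k ∈ univ.filter (fun k : Fin d => (k : ℕ) < iN + 1),
                qf ν F (k : ℕ) (glue (k : ℕ) b a) (b k)) := by
            rw [← Finset.sum_mul]; ring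
    rw [hT, hT', Finset.mul_sum, Finset.mul_sum]
    exact Finset.sum_congr rfl fun a _ => step1 a
  have h2 : (N : ℝ) ^ iN * ((N : ℝ) ^ d * T') = (N : ℝ) ^ d * U := by
    have hTcomm : T' = ∑ b, ∑ a, Δ i (a i) (b i) *
        (μ a * ∏ k ∈ univ.filter (fun k : Fin d => (k : ℕ) < iN + 1),
          qf ν F (k : ℕ) (glue (k : ℕ) b a) (b k)) := by
      rw [hT']; exact Finset.sum_comm
    have step2 : ∀ b : Fin d → Fin N,
        (N : ℝ) ^ iN * ((N : ℝ) ^ d * ∑ a, Δ i (a i) (b i) *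
          (μ a * ∏ k ∈ univ.filter (fun k : Fin d => (k : ℕ) < iN + 1),
            qf ν F (k : ℕ) (glue (k : ℕ) b a) (b k)))
        = (N : ℝ) ^ d * ∑ a, Δ i (a i) (b i) * Ff F iN (glue iN b a) (b i) := by
      intro b
      have hrw : (N : ℝ) ^ d * ∑ a, Δ i (a i) (b i) *
          (μ a * ∏ k ∈ univ.filter (fun k : Fin d => (k : ℕ) < iN + 1),
            qf ν F (k : ℕ) (glue (k : ℕ) b a) (b k))
          = ∑ a : Fin d → Fin N, ∑ c : Fin d → Fin N,
              (Δ i (a i) (b i) * qf ν F iN (glue iN b a) (b i)) *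
              (μ (glue iN c a) * ∏ k ∈ univ.filter (fun k : Fin d => (k : ℕ) < iN),
                qf ν F (k : ℕ) (glue (k : ℕ) b (glue iN c a)) (b k)) := by
        calc (N : ℝ) ^ d * ∑ a, Δ i (a i) (b i) *
            (μ a * ∏ k ∈ univ.filter (fun k : Fin d => (k : ℕ) < iN + 1),
              qf ν F (k : ℕ) (glue (k : ℕ) b a) (b k))
            = ∑ p : (Fin d → Fin N) × (Fin d → Fin N),
                Δ i (p.1 i) (b i) *
                (μ p.1 * ∏ k ∈ univ.filter (fun k : Fin d => (k : ℕ) < iN + 1),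
                  qf ν F (k : ℕ) (glue (k : ℕ) b p.1) (b k)) := (sum_fst hN _).symm
          _ = ∑ p : (Fin d → Fin N) × (Fin d → Fin N),
                Δ i ((glue iN p.1 p.2) i) (b i) *
                (μ (glue iN p.1 p.2) *
                  ∏ k ∈ univ.filter (fun k : Fin d => (k : ℕ) < iN + 1),
                    qf ν F (k : ℕ) (glue (k : ℕ) b (glue iN p.1 p.2)) (b k)) :=
              (sum_glue iN (fun u _ => Δ i (u i) (b i) *
                (μ u * ∏ k ∈ univ.filter (fun k : Fin d => (k : ℕ) < iN + 1),
                  qf ν F (k : ℕ) (glue (k : ℕ) b u) (b k)))).symm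
          _ = ∑ p : (Fin d → Fin N) × (Fin d → Fin N),
                (Δ i (p.2 i) (b i) * qf ν F iN (glue iN b p.2) (b i)) *
                (μ (glue iN p.1 p.2) *
                  ∏ k ∈ univ.filter (fun k : Fin d => (k : ℕ) < iN),
                    qf ν F (k : ℕ) (glue (k : ℕ) b (glue iN p.1 p.2)) (b k)) := by
              refine Finset.sum_congr rfl fun p _ => ?_
              rw [show (glue iN p.1 p.2) i = p.2 i from glue_ge (le_refl iN),
                Ilt_insert hi, Finset.prod_insert (notMem_Ilt hi)]
              have hq : qf ν F ((⟨iN, hi⟩ : Fin d) : ℕ)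
                  (glue ((⟨iN, hi⟩ : Fin d) : ℕ) b (glue iN p.1 p.2)) (b ⟨iN, hi⟩)
                  = qf ν F iN (glue iN b p.2) (b i) := by
                rw [glue_glue_right (le_refl iN)]
              rw [hq]
              ring
          _ = ∑ c : Fin d → Fin N, ∑ a : Fin d → Fin N,
                (Δ i (a i) (b i) * qf ν F iN (glue iN b a) (b i)) *
                (μ (glue iN c a) * ∏ k ∈ univ.filter (fun k : Fin d => (k : ℕ) < iN),
                  qf ν F (k : ℕ) (glue (k : ℕ) b (glue iN c a)) (b k)) := by
              rw [Fintype.sum_prod_type]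
          _ = ∑ a : Fin d → Fin N, ∑ c : Fin d → Fin N,
                (Δ i (a i) (b i) * qf ν F iN (glue iN b a) (b i)) *
                (μ (glue iN c a) * ∏ k ∈ univ.filter (fun k : Fin d => (k : ℕ) < iN),
                  qf ν F (k : ℕ) (glue (k : ℕ) b (glue iN c a)) (b k)) :=
              Finset.sum_comm
      calc (N : ℝ) ^ iN * ((N : ℝ) ^ d * ∑ a, Δ i (a i) (b i) *
            (μ a * ∏ k ∈ univ.filter (fun k : Fin d => (k : ℕ) < iN + 1),
              qf ν F (k : ℕ) (glue (k : ℕ) b a) (b k)))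
          = ∑ a : Fin d → Fin N,
              (Δ i (a i) (b i) * qf ν F iN (glue iN b a) (b i)) *
              ((N : ℝ) ^ iN * ∑ c : Fin d → Fin N,
                μ (glue iN c a) * ∏ k ∈ univ.filter (fun k : Fin d => (k : ℕ) < iN),
                  qf ν F (k : ℕ) (glue (k : ℕ) b (glue iN c a)) (b k)) := by
            rw [hrw]
            simp only [Finset.mul_sum]
            refine Finset.sum_congr rfl fun a _ => Finset.sum_congr rfl fun c _ => by ring
        _ = ∑ a : Fin d → Fin N,
              (Δ i (a i) (b i) * qf ν F iN (glue iN b a) (b i)) *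
              ((N : ℝ) ^ d * mf ν F iN (glue iN b a)) := by
            refine Finset.sum_congr rfl fun a _ => ?_
            rw [lemB hN hd hF iN (by omega) a b]
        _ = (N : ℝ) ^ d * ∑ a, Δ i (a i) (b i) * Ff F iN (glue iN b a) (b i) := by
            simp only [Finset.mul_sum]
            refine Finset.sum_congr rfl fun a _ => ?_
            have hmq := mf_mul_qf (ν := ν) hF.1 hi (glue iN b a) (b i)
            calc (Δ i (a i) (b i) * qf ν F iN (glue iN b a) (b i)) *
                  ((N : ℝ) ^ d * mf ν F iN (glue iN b a))
                = (N : ℝ) ^ d * (Δ i (a i) (b i) *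
                    (mf ν F iN (glue iN b a) * qf ν F iN (glue iN b a) (b i))) := by
                  ring
              _ = (N : ℝ) ^ d * (Δ i (a i) (b i) * Ff F iN (glue iN b a) (b i)) := by
                  rw [hmq]
    rw [hTcomm, hU]
    simp only [Finset.mul_sum]
    refine Finset.sum_congr rfl fun b _ => ?_
    have h := step2 b
    simp only [Finset.mul_sum] at h
    exact h
  have h3 : (N : ℝ) * U = (N : ℝ) ^ d * Ri := by
    have hFf : ∀ (g : Fin d → Fin N) (β : Fin N), Ff F iN g β = F i g β := by
      intro g β
      rw [Ff, dif_pos hi]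
    have hU' : U = ∑ g : Fin d → Fin N, ∑ y : Fin d → Fin N,
        Δ i (g i) (y i) * Ff F iN g (y i) := by
      rw [hU]
      calc ∑ b, ∑ a, Δ i (a i) (b i) * Ff F iN (glue iN b a) (b i)
          = ∑ p : (Fin d → Fin N) × (Fin d → Fin N),
              Δ i (p.2 i) (p.1 i) * Ff F iN (glue iN p.1 p.2) (p.1 i) := by
            rw [Fintype.sum_prod_type]
        _ = ∑ p : (Fin d → Fin N) × (Fin d → Fin N),
              Δ i ((glue iN p.1 p.2) i) ((glue iN p.2 p.1) i) *
                Ff F iN (glue iN p.1 p.2) ((glue iN p.2 p.1) i) := by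
            refine Finset.sum_congr rfl fun p _ => ?_
            rw [show (glue iN p.1 p.2) i = p.2 i from glue_ge (le_refl iN),
              show (glue iN p.2 p.1) i = p.1 i from glue_ge (le_refl iN)]
        _ = ∑ p : (Fin d → Fin N) × (Fin d → Fin N),
              Δ i (p.1 i) (p.2 i) * Ff F iN p.1 (p.2 i) :=
            sum_glue iN (fun u v => Δ i (u i) (v i) * Ff F iN u (v i))
        _ = ∑ g : Fin d → Fin N, ∑ y : Fin d → Fin N,
              Δ i (g i) (y i) * Ff F iN g (y i) := by
            rw [Fintype.sum_prod_type]
    have inner : ∀ g : Fin d → Fin N,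
        (N : ℝ) * ∑ y : Fin d → Fin N, Δ i (g i) (y i) * Ff F iN g (y i)
          = (N : ℝ) ^ d * ∑ β, Δ i (g i) β * Ff F iN g β := by
      intro g
      have hcl := count_lemma (N := N) i (fun β => Δ i (g i) β * Ff F iN g β)
        (fun _ _ => (1 : ℝ)) (fun _ _ _ => rfl)
      simp only [mul_one] at hcl
      rw [hcl]
      calc ∑ β, Δ i (g i) β * Ff F iN g β * ∑ _c : Fin d → Fin N, (1 : ℝ)
          = ∑ β, Δ i (g i) β * Ff F iN g β * (N : ℝ) ^ d := by
            refine Finset.sum_congr rfl fun β _ => ?_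
            rw [Finset.sum_const, card_univ, nsmul_eq_mul, mul_one, card_fun_real]
        _ = (N : ℝ) ^ d * ∑ β, Δ i (g i) β * Ff F iN g β := by
            rw [← Finset.sum_mul]; ring
    rw [hU', hRi]
    simp only [Finset.mul_sum]
    refine Finset.sum_congr rfl fun g _ => ?_
    have h := inner g
    simp only [Finset.mul_sum] at h
    rw [h]
    exact Finset.sum_congr rfl fun β _ => by rw [hFf]
  -- combine
  have hbig : (N : ℝ) ^ (2 * d + iN) * T = (N : ℝ) ^ (2 * d + iN) * Ri := by
    linear_combination (N : ℝ) ^ (d + iN) * h1 + (N : ℝ) ^ (iN + 1) * h2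
      + (N : ℝ) ^ (d + iN) * h3
  exact mul_left_cancel₀ (pow_ne_zero _ hNne) hbig

end FlowProof4

namespace FlowProof5
open FlowProof

variable {N d : ℕ}

def Mmu (μ : (Fin d → Fin N) → ℝ) (i : ℕ) (g : Fin d → Fin N) : ℝ :=
  ∑ a, if (∀ k : Fin d, i ≤ (k : ℕ) → a k = g k) then μ a else 0

def Mnu (ν : (Fin d → Fin N) → ℝ) (j : Fin d) (g : Fin d → Fin N) (β : Fin N) : ℝ :=
  ∑ b, if (∀ k : Fin d, (k : ℕ) < (j : ℕ) → b k = g k) ∧ b j = β then ν b else 0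

def F0 (μ ν : (Fin d → Fin N) → ℝ) (j : Fin d) (g : Fin d → Fin N) (β : Fin N) : ℝ :=
  Mmu μ (j : ℕ) g * Mnu ν j g β

variable {μ ν : (Fin d → Fin N) → ℝ}

lemma Mmu_nonneg (hμ0 : ∀ a, 0 ≤ μ a) (i : ℕ) (g : Fin d → Fin N) : 0 ≤ Mmu μ i g :=
  Finset.sum_nonneg fun a _ => by split <;> [exact hμ0 a; exact le_refl 0]

lemma Mnu_nonneg (hν0 : ∀ b, 0 ≤ ν b) (j : Fin d) (g : Fin d → Fin N) (β : Fin N) :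
    0 ≤ Mnu ν j g β :=
  Finset.sum_nonneg fun b _ => by split <;> [exact hν0 b; exact le_refl 0]

lemma Mnu_sum (j : Fin d) (g : Fin d → Fin N) :
    ∑ β, Mnu ν j g β
      = ∑ b, if (∀ k : Fin d, (k : ℕ) < (j : ℕ) → b k = g k) then ν b else 0 := by
  unfold Mnu
  rw [Finset.sum_comm]
  refine Finset.sum_congr rfl fun b _ => ?_
  by_cases hP : (∀ k : Fin d, (k : ℕ) < (j : ℕ) → b k = g k)
  · rw [if_pos hP, Finset.sum_congr rfl fun β _ =>
      if_congr (and_iff_right hP) rfl rfl,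
      Finset.sum_ite_eq univ (b j) (fun _ => ν b), if_pos (mem_univ _)]
  · rw [if_neg hP]
    exact Finset.sum_eq_zero fun β _ => if_neg (fun hc => hP hc.1)

lemma isFlowChart_F0 (hd : 0 < d) (hμ0 : ∀ a, 0 ≤ μ a) (hμ1 : ∑ a, μ a = 1)
    (hν0 : ∀ b, 0 ≤ ν b) (hν1 : ∑ b, ν b = 1) :
    IsFlowChart μ ν (F0 μ ν) := by
  refine ⟨?_, ?_, ?_, ?_⟩
  · intro j g β
    exact mul_nonneg (Mmu_nonneg hμ0 _ _) (Mnu_nonneg hν0 _ _ _)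
  · -- μ-marginal
    intro hd' a
    unfold F0
    rw [← Finset.mul_sum, Mnu_sum]
    have h1 : Mmu μ ((⟨0, hd'⟩ : Fin d) : ℕ) a = μ a := by
      unfold Mmu
      calc ∑ a', (if (∀ k : Fin d, ((⟨0, hd'⟩ : Fin d) : ℕ) ≤ (k : ℕ) → a' k = a k)
              then μ a' else 0)
          = ∑ a', (if a' = a then μ a' else 0) := by
            refine Finset.sum_congr rfl fun a' _ => ?_
            refine if_congr ?_ rfl rfl
            constructor
            · intro h; funext k; exact h k (Nat.zero_le _)
            · intro h k _; rw [h]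
        _ = μ a := by
            rw [Finset.sum_ite_eq' univ a μ, if_pos (mem_univ _)]
    have h2 : (∑ b, if (∀ k : Fin d, (k : ℕ) < ((⟨0, hd'⟩ : Fin d) : ℕ) → b k = a k)
        then ν b else 0) = 1 := by
      calc (∑ b, if (∀ k : Fin d, (k : ℕ) < ((⟨0, hd'⟩ : Fin d) : ℕ) → b k = a k)
              then ν b else 0)
          = ∑ b, ν b := by
            refine Finset.sum_congr rfl fun b _ => ?_
            rw [if_pos]
            intro k hk
            exact absurd hk (by simp)
        _ = 1 := hν1
    rw [h1, h2, mul_one]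
  · -- ν-marginal
    intro hd' b
    set l : Fin d := ⟨d - 1, Nat.sub_lt hd' Nat.one_pos⟩ with hl
    have hlval : (l : ℕ) = d - 1 := rfl
    unfold F0
    have hMnu : ∀ α, Mnu ν l (Function.update b l α) (b l) = ν b := by
      intro α
      unfold Mnu
      calc ∑ b', (if (∀ k : Fin d, (k : ℕ) < (l : ℕ) → b' k = Function.update b l α k)
              ∧ b' l = b l then ν b' else 0)
          = ∑ b', (if b' = b then ν b' else 0) := by
            refine Finset.sum_congr rfl fun b' _ => ?_
            refine if_congr ?_ rfl rfl
            constructor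
            · rintro ⟨h1, h2⟩
              funext k
              by_cases hk : (k : ℕ) < (l : ℕ)
              · rw [h1 k hk, Function.update_of_ne]
                intro hkl
                rw [hkl] at hk
                exact lt_irrefl _ hk
              · have hkl : k = l := Fin.ext (by rw [hlval] at hk ⊢; omega)
                rw [hkl]; exact h2
            · rintro rfl
              refine ⟨fun k hk => ?_, rfl⟩
              rw [Function.update_of_ne]
              intro hkl
              rw [hkl] at hk
              exact lt_irrefl _ hk
        _ = ν b := by rw [Finset.sum_ite_eq' univ b ν, if_pos (mem_univ _)]
    have hMmu : ∑ α, Mmu μ (l : ℕ) (Function.update b l α) = 1 := by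
      unfold Mmu
      rw [Finset.sum_comm]
      calc ∑ a, ∑ α, (if (∀ k : Fin d, (l : ℕ) ≤ (k : ℕ) → a k = Function.update b l α k)
              then μ a else 0)
          = ∑ a, ∑ α, (if a l = α then μ a else 0) := by
            refine Finset.sum_congr rfl fun a _ => Finset.sum_congr rfl fun α _ => ?_
            refine if_congr ?_ rfl rfl
            constructor
            · intro h
              have := h l (le_refl _)
              rwa [Function.update_self] at this
            · intro h k hk
              have hkl : k = l := Fin.ext (by rw [hlval] at hk ⊢; omega)
              rw [hkl, Function.update_self]
              exact h
        _ = ∑ a, μ a := by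
            refine Finset.sum_congr rfl fun a _ => ?_
            rw [Finset.sum_ite_eq univ (a l) (fun _ => μ a), if_pos (mem_univ _)]
        _ = 1 := hμ1
    calc ∑ α, Mmu μ (l : ℕ) (Function.update b l α) * Mnu ν l (Function.update b l α) (b l)
        = ∑ α, Mmu μ (l : ℕ) (Function.update b l α) * ν b := by
          refine Finset.sum_congr rfl fun α _ => ?_
          rw [hMnu α]
      _ = (∑ α, Mmu μ (l : ℕ) (Function.update b l α)) * ν b := by rw [Finset.sum_mul]
      _ = ν b := by rw [hMmu, one_mul]
  · -- consistency
    intro i hi h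
    unfold F0
    have hMnuEq : ∀ α, Mnu ν i (Function.update h i α) (h i)
        = ∑ b, if (∀ k : Fin d, (k : ℕ) < (i : ℕ) + 1 → b k = h k) then ν b else 0 := by
      intro α
      unfold Mnu
      refine Finset.sum_congr rfl fun b _ => ?_
      refine if_congr ?_ rfl rfl
      constructor
      · rintro ⟨h1, h2⟩ k hk
        by_cases hk' : (k : ℕ) < (i : ℕ)
        · rw [h1 k hk', Function.update_of_ne]
          intro hkl; rw [hkl] at hk'; exact lt_irrefl _ hk'
        · have hkl : k = i := Fin.ext (by omega)
          rw [hkl]; exact h2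
      · intro hall
        refine ⟨fun k hk => ?_, hall i (Nat.lt_succ_self _)⟩
        rw [hall k (by omega), Function.update_of_ne]
        intro hkl; rw [hkl] at hk; exact lt_irrefl _ hk
    have hMmuSum : ∑ α, Mmu μ (i : ℕ) (Function.update h i α)
        = Mmu μ ((i : ℕ) + 1) h := by
      unfold Mmu
      rw [Finset.sum_comm]
      refine Finset.sum_congr rfl fun a _ => ?_
      calc ∑ α, (if (∀ k : Fin d, (i : ℕ) ≤ (k : ℕ) → a k = Function.update h i α k)
              then μ a else 0)
          = ∑ α, (if (∀ k : Fin d, (i : ℕ) + 1 ≤ (k : ℕ) → a k = h k) ∧ a i = α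
              then μ a else 0) := by
            refine Finset.sum_congr rfl fun α _ => ?_
            refine if_congr ?_ rfl rfl
            constructor
            · intro hall
              constructor
              · intro k hk
                rw [hall k (by omega), Function.update_of_ne]
                intro hkl; rw [hkl] at hk; omega
              · have := hall i (le_refl _)
                rwa [Function.update_self] at this
            · rintro ⟨h1, h2⟩ k hk
              by_cases hk' : (i : ℕ) + 1 ≤ (k : ℕ)
              · rw [h1 k hk', Function.update_of_ne]
                intro hkl; rw [hkl] at hk'; omega
              · have hkl : k = i := Fin.ext (by omega)
                rw [hkl, Function.update_self]; exact h2
        _ = (if (∀ k : Fin d, (i : ℕ) + 1 ≤ (k : ℕ) → a k = h k) then μ a else 0) := by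
            by_cases hP : (∀ k : Fin d, (i : ℕ) + 1 ≤ (k : ℕ) → a k = h k)
            · rw [if_pos hP, Finset.sum_congr rfl fun α _ =>
                if_congr (and_iff_right hP) rfl rfl,
                Finset.sum_ite_eq univ (a i) (fun _ => μ a), if_pos (mem_univ _)]
            · rw [if_neg hP]
              exact Finset.sum_eq_zero fun α _ => if_neg (fun hc => hP hc.1)
    have hRHS : ∑ β, Mnu ν (⟨(i : ℕ) + 1, hi⟩ : Fin d) h β
        = ∑ b, if (∀ k : Fin d, (k : ℕ) < (i : ℕ) + 1 → b k = h k) then ν b else 0 := by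
      rw [Mnu_sum]
    calc ∑ α, Mmu μ (i : ℕ) (Function.update h i α) * Mnu ν i (Function.update h i α) (h i)
        = ∑ α, Mmu μ (i : ℕ) (Function.update h i α) *
            (∑ b, if (∀ k : Fin d, (k : ℕ) < (i : ℕ) + 1 → b k = h k) then ν b else 0) := by
          refine Finset.sum_congr rfl fun α _ => ?_
          rw [hMnuEq α]
      _ = (∑ α, Mmu μ (i : ℕ) (Function.update h i α)) *
            (∑ b, if (∀ k : Fin d, (k : ℕ) < (i : ℕ) + 1 → b k = h k) then ν b else 0) := by
          rw [Finset.sum_mul]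
      _ = Mmu μ ((i : ℕ) + 1) h *
            (∑ b, if (∀ k : Fin d, (k : ℕ) < (i : ℕ) + 1 → b k = h k) then ν b else 0) := by
          rw [hMmuSum]
      _ = ∑ β, Mmu μ ((⟨(i : ℕ) + 1, hi⟩ : Fin d) : ℕ) h * Mnu ν ⟨(i : ℕ) + 1, hi⟩ h β := by
          rw [← Finset.mul_sum, hRHS]
end FlowProof5


/-- For probability measures `μ`, `ν` on the grid `{1,…,N}^d` and
a separable cost `c(a,b) = ∑ i, Δ i (a i) (b i)`, the minimum transport cost over
transport plans between `μ` and `ν` is at most the minimum of `R` over flow charts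
between `μ` and `ν`: `𝒲_c(μ,ν) ≤ 𝓡(μ,ν)`. -/
theorem wasserstein_le_flowChart_min (N d : ℕ) (hN : 0 < N) (hd : 0 < d)
    (μ ν : (Fin d → Fin N) → ℝ)
    (hμ0 : ∀ a, 0 ≤ μ a) (hμ1 : ∑ a, μ a = 1)
    (hν0 : ∀ b, 0 ≤ ν b) (hν1 : ∑ b, ν b = 1)
    (Δ : Fin d → Fin N → Fin N → ℝ) (hΔ : ∀ i x y, 0 ≤ Δ i x y) :
    sInf {w : ℝ | ∃ π : (Fin d → Fin N) → (Fin d → Fin N) → ℝ,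
        (∀ a b, 0 ≤ π a b) ∧
        (∀ a, ∑ b, π a b = μ a) ∧
        (∀ b, ∑ a, π a b = ν b) ∧
        w = ∑ a : Fin d → Fin N, ∑ b : Fin d → Fin N,
              (∑ i : Fin d, Δ i (a i) (b i)) * π a b}
      ≤ sInf {r : ℝ | ∃ F : Fin d → (Fin d → Fin N) → Fin N → ℝ,
        IsFlowChart μ ν F ∧ r = flowR Δ F} := by
  refine le_csInf
    ⟨flowR Δ (FlowProof5.F0 μ ν), FlowProof5.F0 μ ν,
      FlowProof5.isFlowChart_F0 hd hμ0 hμ1 hν0 hν1, rfl⟩ ?_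
  rintro r ⟨F, hF, rfl⟩
  have hbdd : BddBelow {w : ℝ | ∃ π : (Fin d → Fin N) → (Fin d → Fin N) → ℝ,
      (∀ a b, 0 ≤ π a b) ∧
      (∀ a, ∑ b, π a b = μ a) ∧
      (∀ b, ∑ a, π a b = ν b) ∧
      w = ∑ a : Fin d → Fin N, ∑ b : Fin d → Fin N,
            (∑ i : Fin d, Δ i (a i) (b i)) * π a b} := by
    refine ⟨0, fun w hw => ?_⟩
    obtain ⟨π, hπ0, -, -, rfl⟩ := hw
    refine Finset.sum_nonneg fun a _ => Finset.sum_nonneg fun b _ => ?_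
    exact mul_nonneg (Finset.sum_nonneg fun i _ => hΔ i _ _) (hπ0 a b)
  have hcost : ∑ a : Fin d → Fin N, ∑ b : Fin d → Fin N,
      (∑ i : Fin d, Δ i (a i) (b i)) * FlowProof3.pf μ ν F a b = flowR Δ F := by
    unfold flowR
    calc ∑ a : Fin d → Fin N, ∑ b : Fin d → Fin N,
          (∑ i : Fin d, Δ i (a i) (b i)) * FlowProof3.pf μ ν F a b
        = ∑ a : Fin d → Fin N, ∑ b : Fin d → Fin N, ∑ i : Fin d,
            Δ i (a i) (b i) * FlowProof3.pf μ ν F a b := by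
          refine Finset.sum_congr rfl fun a _ => Finset.sum_congr rfl fun b _ => ?_
          rw [Finset.sum_mul]
      _ = ∑ a : Fin d → Fin N, ∑ i : Fin d, ∑ b : Fin d → Fin N,
            Δ i (a i) (b i) * FlowProof3.pf μ ν F a b := by
          exact Finset.sum_congr rfl fun a _ => Finset.sum_comm
      _ = ∑ i : Fin d, ∑ a : Fin d → Fin N, ∑ b : Fin d → Fin N,
            Δ i (a i) (b i) * FlowProof3.pf μ ν F a b := Finset.sum_comm
      _ = ∑ i : Fin d, ∑ g : Fin d → Fin N, ∑ β : Fin N, Δ i (g i) β * F i g β :=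
          Finset.sum_congr rfl fun i _ => FlowProof4.pf_cost hN hd hF Δ i
  refine csInf_le hbdd ?_
  exact ⟨FlowProof3.pf μ ν F,
    FlowProof3.pf_nonneg hμ0 hν0 hF.1,
    FlowProof3.pf_marg1 hN,
    FlowProof3.pf_marg2 hN hd hF,
    hcost.symm⟩
end

section
/- Let (F₁,…,F_d) be a flow chart between probability measures μ and ν on the grid G = {1,…,N}^d, and suppose π is a nonnegative function on G × G such that for every i ∈ {1,…,d} and all indices, Σ_{a₁,…,a_{i−1},b_{i+1},…,b_d} π(a₁,…,a_d; b₁,…,b_d) = f⁽ⁱ⁾_{b₁,…,b_{i−1},a_i,…,a_d,b_i}. Then π is a transport plan between μ and ν: Σ_{b∈G} π(a,b) = μ(a) for all a ∈ G and Σ_{a∈G} π(a,b) = ν(b) for all b ∈ G. -/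
/-- The family `f⁽ⁱ⁾` obtained from `π` by summing over `a₁,…,a_{i−1}` and
`b_{i+1},…,b_d`: here `g` encodes `(b₁,…,b_{i−1}, a_i,…,a_d)` (coordinates `k < i`
hold `b_k`, coordinates `k ≥ i` hold `a_k`) and `β` is `b_i`, so we sum `π a b` over
all `a`, `b` compatible with this data. -/
def marg {N d : ℕ} (π : (Fin d → Fin N) → (Fin d → Fin N) → ℝ)
    (i : Fin d) (g : Fin d → Fin N) (β : Fin N) : ℝ :=
  ∑ a : Fin d → Fin N, ∑ b : Fin d → Fin N,
    if (∀ k, i ≤ k → a k = g k) ∧ (∀ k, k < i → b k = g k) ∧ b i = β then π a b else 0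

open Finset Function

section
variable {N d : ℕ} (π : (Fin d → Fin N) → (Fin d → Fin N) → ℝ)

lemma marg_of_isBot {i : Fin d} (hi : IsBot i) (g : Fin d → Fin N) (β : Fin N) :
    marg π i g β = ∑ b, if b i = β then π g b else 0 := by
  have hcond : ∀ a b : Fin d → Fin N,
      ((∀ k, i ≤ k → a k = g k) ∧ (∀ k, k < i → b k = g k) ∧ b i = β) ↔ (a = g ∧ b i = β) :=
    fun a b => by
      simp only [funext_iff, show ∀ k, i ≤ k from hi, true_implies, fun k => not_lt_of_ge (hi k), false_implies,
        implies_true, true_and]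
  simp only [marg, hcond, ite_and]
  rw [sum_comm]
  simp

lemma sum_marg_of_isBot {i : Fin d} (hi : IsBot i) (a : Fin d → Fin N) :
    ∑ β, marg π i a β = ∑ b, π a b := by
  simp only [marg_of_isBot π hi]
  rw [sum_comm]
  simp

lemma marg_update_of_isTop {i : Fin d} (hi : IsTop i) (b : Fin d → Fin N) (α : Fin N) :
    marg π i (update b i α) (b i) = ∑ a, if a i = α then π a b else 0 := by
  have hcond : ∀ a b' : Fin d → Fin N,
      ((∀ k, i ≤ k → a k = update b i α k) ∧ (∀ k, k < i → b' k = update b i α k) ∧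
        b' i = b i) ↔ (a i = α ∧ b' = b) := by
    intro a b'
    have hge : ∀ k, i ≤ k ↔ k = i := fun k => ⟨fun h => le_antisymm (hi k) h, fun h => h ▸ le_rfl⟩
    have hlt : ∀ k, k < i ↔ k ≠ i := fun k => (hi k).lt_iff_ne
    simp only [hge, hlt, forall_eq, update_self]
    constructor
    · rintro ⟨ha, hb, hbi⟩
      refine ⟨ha, funext fun k => ?_⟩
      by_cases hk : k = i
      · exact hk ▸ hbi
      · rw [hb k hk, update_of_ne hk]
    · rintro ⟨ha, rfl⟩
      exact ⟨ha, fun k hk => (update_of_ne hk _ _).symm, rfl⟩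
  simp only [marg, hcond, ite_and]
  simp

lemma sum_marg_update_of_isTop {i : Fin d} (hi : IsTop i) (b : Fin d → Fin N) :
    ∑ α, marg π i (update b i α) (b i) = ∑ a, π a b := by
  simp only [marg_update_of_isTop π hi]
  rw [sum_comm]
  simp

end

theorem glued_is_plan_general (N d : ℕ) (hd : 0 < d)
    (μ ν : (Fin d → Fin N) → ℝ)
    (F : Fin d → (Fin d → Fin N) → Fin N → ℝ)
    (hF : IsFlowChart μ ν F)
    (π : (Fin d → Fin N) → (Fin d → Fin N) → ℝ)
    (hπF : ∀ (i : Fin d) (g : Fin d → Fin N) (β : Fin N), marg π i g β = F i g β) :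
    (∀ a, ∑ b, π a b = μ a) ∧ (∀ b, ∑ a, π a b = ν b) := by
  obtain ⟨-, hμ, hν, -⟩ := hF
  constructor
  · intro a
    rw [← hμ hd a, ← sum_marg_of_isBot π (i := ⟨0, hd⟩) (fun k => Nat.zero_le k) a]
    simp only [hπF]
  · intro b
    rw [← hν hd b, ← sum_marg_update_of_isTop π (i := ⟨d - 1, by omega⟩)
      (fun k => Nat.le_sub_one_of_lt k.isLt) b]
    simp only [hπF]

/-- Let `F` be a flow chart between probability measures `μ` and
`ν` on the grid `{1,…,N}^d`, and let `π` be a nonnegative function on `G × G`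
whose partial marginals coincide with the families `F i` for every `i`. Then `π`
is a transport plan between `μ` and `ν`. -/
theorem glued_is_plan (N d : ℕ) (hN : 0 < N) (hd : 0 < d)
    (μ ν : (Fin d → Fin N) → ℝ)
    (hμ0 : ∀ a, 0 ≤ μ a) (hμ1 : ∑ a, μ a = 1)
    (hν0 : ∀ b, 0 ≤ ν b) (hν1 : ∑ b, ν b = 1)
    (F : Fin d → (Fin d → Fin N) → Fin N → ℝ)
    (hF : IsFlowChart μ ν F)
    (π : (Fin d → Fin N) → (Fin d → Fin N) → ℝ)
    (hπ0 : ∀ a b, 0 ≤ π a b)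
    (hπF : ∀ (i : Fin d) (g : Fin d → Fin N) (β : Fin N), marg π i g β = F i g β) :
    (∀ a, ∑ b, π a b = μ a) ∧ (∀ b, ∑ a, π a b = ν b) :=
  glued_is_plan_general N d hd μ ν F hF π hπF
end
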